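/- arXiv:2012.05371 — 5 statements merged into one kernel-verified Lean document; each statement's English description precedes it below -/
import Mathlib

section
/- Let φ be an r×1 vector of compactly supported functions in L²(ℝ) satisfying φ = 2∑_{k∈ℤ}a(k)φ(2·−k) a.e. for a finitely supported sequence a:ℤ→ℂ^{r×r}. Put [l_φ,h_φ] := fs(φ) and [l_a,h_a] := fs(a), and let n_φ ≥ max(−l_φ,−l_a) be an integer. Then for every integer n with 1−h_φ ≤ n ≤ n_φ−1 and for a.e. x∈ℝ, φ(x−n)·χ_{[0,∞)}(x) = 2∑_{k=1−h_φ}^{n_φ−1} a(k−2n)·φ(2x−k)·χ_{[0,∞)}(2x) + 2∑_{k≥n_φ} a(k−2n)·φ(2x−k), where in the last sum only finitely many terms are nonzero and each φ(2·−k), k≥n_φ, is supported in [0,∞). -/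
open MeasureTheory Matrix Finset Filter

noncomputable section

namespace Wavelets

/-- membership in `L²(ℝ)` (w.r.t. Lebesgue measure). -/
def MemL2 (f : ℝ → ℂ) : Prop := MeasureTheory.MemLp f 2 (volume : Measure ℝ)

/-- The `L²` inner product `⟨f,g⟩ = ∫ f · conj g`. -/
def inn (f g : ℝ → ℂ) : ℂ := ∫ x : ℝ, f x * (starRingEnd ℂ) (g x)

/-- The squared `L²` norm. -/
def nsq (f : ℝ → ℂ) : ℝ := ∫ x : ℝ, ‖f x‖ ^ 2

/-- supported (a.e.) in `[0,∞)`, i.e. `f` belongs to `L²([0,∞))` if it is also in `L²`. -/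
def SuppHalf (f : ℝ → ℂ) : Prop := ∀ᵐ (x : ℝ) ∂volume, x < 0 → f x = 0

/-- vanishes a.e. outside the interval `[l,h]`. -/
def VanishOutside (f : ℝ → ℂ) (l h : ℤ) : Prop :=
  ∀ᵐ (x : ℝ) ∂volume, x ∉ Set.Icc (l : ℝ) (h : ℝ) → f x = 0

/-- compactly supported (a.e.). -/
def CptSupp (f : ℝ → ℂ) : Prop := ∃ l h : ℤ, VanishOutside f l h

/-- `[l,h] = fs(f)` : the shortest integer-endpoint interval outside which all members of the
family `f` vanish a.e. -/
def IsFS {ι : Type*} (f : ι → ℝ → ℂ) (l h : ℤ) : Prop :=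
  (∀ i, VanishOutside (f i) l h) ∧
    ∀ l' h' : ℤ, (∀ i, VanishOutside (f i) l' h') → l' ≤ l ∧ h ≤ h'

/-- `[l,h] = fs(a)` : the shortest integer interval containing the support of the sequence `a`. -/
def IsFSfilter {M : Type*} [Zero M] (a : ℤ → M) (l h : ℤ) : Prop :=
  (∀ k : ℤ, k ∉ Set.Icc l h → a k = 0) ∧
    ∀ l' h' : ℤ, (∀ k : ℤ, k ∉ Set.Icc l' h' → a k = 0) → l' ≤ l ∧ h ≤ h'

/-- finitely supported sequence. -/
def FinSupp {M : Type*} [Zero M] (a : ℤ → M) : Prop := (Function.support a).Finite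

/-- `(filtSum A φ i x) = (∑_{k∈ℤ} A(k)·φ(x−k))_i`. -/
def filtSum {B : Type*} {r : ℕ} (A : ℤ → Matrix B (Fin r) ℂ) (φ : Fin r → ℝ → ℂ)
    (i : B) (x : ℝ) : ℂ :=
  ∑ᶠ k : ℤ, ∑ j : Fin r, A k i j * φ j (x - (k : ℝ))

/-- `(filtSumGe A φ n i x) = (∑_{k ≥ n} A(k)·φ(x−k))_i`. -/
def filtSumGe {B : Type*} {r : ℕ} (A : ℤ → Matrix B (Fin r) ℂ) (φ : Fin r → ℝ → ℂ)
    (n : ℤ) (i : B) (x : ℝ) : ℂ :=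
  ∑ᶠ (k : ℤ) (_ : n ≤ k), ∑ j : Fin r, A k i j * φ j (x - (k : ℝ))

/-- dyadic dilation `2^{j/2} f(2^j ·)`. -/
def dil (j : ℤ) (f : ℝ → ℂ) : ℝ → ℂ :=
  fun x => ((Real.sqrt 2 ^ j : ℝ) : ℂ) * f ((2 : ℝ) ^ j * x)

/-- finite linear combination of a family of functions. -/
def fc {I : Type*} (c : I →₀ ℂ) (F : I → ℝ → ℂ) : ℝ → ℂ :=
  fun x => ∑ i ∈ c.support, c i * F i x

/-- Riesz sequence (of functions, in `L²`). -/
def RieszSeq {I : Type*} (F : I → ℝ → ℂ) : Prop :=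
  ∃ C > (0 : ℝ), ∀ c : I →₀ ℂ,
    C⁻¹ * (∑ i ∈ c.support, ‖c i‖ ^ 2) ≤ nsq (fc c F) ∧
      nsq (fc c F) ≤ C * (∑ i ∈ c.support, ‖c i‖ ^ 2)

/-- Bessel sequence in `L²(ℝ)`. -/
def Bessel {I : Type*} (F : I → ℝ → ℂ) : Prop :=
  ∃ C > (0 : ℝ), ∀ f : ℝ → ℂ, MemL2 f → (∑' i : I, ‖inn f (F i)‖ ^ 2) ≤ C * nsq f

/-- Bessel sequence in `L²([0,∞))`. -/
def BesselHalf {I : Type*} (F : I → ℝ → ℂ) : Prop :=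
  ∃ C > (0 : ℝ), ∀ f : ℝ → ℂ, MemL2 f → SuppHalf f →
    (∑' i : I, ‖inn f (F i)‖ ^ 2) ≤ C * nsq f

/-- `f` lies in the `L²`-closure of the linear span of the family `F`. -/
def InClosedSpan {I : Type*} (F : I → ℝ → ℂ) (f : ℝ → ℂ) : Prop :=
  MemL2 f ∧ ∀ ε > (0 : ℝ), ∃ c : I →₀ ℂ, nsq (fun x => f x - fc c F x) < ε ^ 2

/-- Riesz basis of `L²(ℝ)`. -/
def RieszBasisR {I : Type*} (F : I → ℝ → ℂ) : Prop :=
  (∀ i, MemL2 (F i)) ∧ RieszSeq F ∧ ∀ f : ℝ → ℂ, MemL2 f → InClosedSpan F f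

/-- Riesz basis of `L²([0,∞))`. -/
def RieszBasisHalf {I : Type*} (F : I → ℝ → ℂ) : Prop :=
  (∀ i, MemL2 (F i) ∧ SuppHalf (F i)) ∧ RieszSeq F ∧
    ∀ f : ℝ → ℂ, MemL2 f → SuppHalf f → InClosedSpan F f

/-- biorthogonal families over the same index set. -/
def Biorth {I : Type*} [DecidableEq I] (F G : I → ℝ → ℂ) : Prop :=
  ∀ i j : I, inn (F i) (G j) = if i = j then 1 else 0

/-- orthonormal family of functions. -/
def OrthonormalFam {I : Type*} [DecidableEq I] (F : I → ℝ → ℂ) : Prop :=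
  ∀ i j : I, inn (F i) (F j) = if i = j then 1 else 0

/-- orthonormal basis of `L²([0,∞))`. -/
def ONBasisHalf {I : Type*} [DecidableEq I] (F : I → ℝ → ℂ) : Prop :=
  (∀ i, MemL2 (F i) ∧ SuppHalf (F i)) ∧ OrthonormalFam F ∧
    ∀ f : ℝ → ℂ, MemL2 f → SuppHalf f → InClosedSpan F f

/-- orthonormal basis of `L²(ℝ)`. -/
def ONBasisR {I : Type*} [DecidableEq I] (F : I → ℝ → ℂ) : Prop :=
  (∀ i, MemL2 (F i)) ∧ OrthonormalFam F ∧ ∀ f : ℝ → ℂ, MemL2 f → InClosedSpan F f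

/-- `f` has (at least) `m` vanishing moments. -/
def VMo (f : ℝ → ℂ) (m : ℕ) : Prop := ∀ j < m, (∫ x : ℝ, (x : ℂ) ^ j * f x) = 0

/-- index set of the affine system `AS₀(φ;ψ)` over `ℝ`. -/
abbrev ASIndexR (r : ℕ) := (Fin r × ℤ) ⊕ (Fin r × ℕ × ℤ)

/-- the affine system `AS₀(φ;ψ)` over the real line. -/
def ASR {r : ℕ} (φ ψ : Fin r → ℝ → ℂ) : ASIndexR r → ℝ → ℂ
  | Sum.inl (i, k) => fun x => φ i (x - (k : ℝ))
  | Sum.inr (i, j, k) => fun x =>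
      ((Real.sqrt 2 ^ (j : ℕ) : ℝ) : ℂ) * ψ i ((2 : ℝ) ^ (j : ℕ) * x - (k : ℝ))

/-- index set `{boundary} ⊔ {(component, shift k ≥ n)}`. -/
abbrev HIdx (B : Type*) (r : ℕ) (n : ℤ) := B ⊕ (Fin r × {k : ℤ // n ≤ k})

/-- the family `Φ = {φ^L} ∪ {φ(·−k) : k ≥ n}`. -/
def PhiFam {B : Type*} {r : ℕ} (φL : B → ℝ → ℂ) (φ : Fin r → ℝ → ℂ) (n : ℤ) :
    HIdx B r n → ℝ → ℂ
  | Sum.inl i => φL i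
  | Sum.inr (i, k) => fun x => φ i (x - (k.1 : ℝ))

/-- the augmented boundary block `{φ^L} ∪ {φ(·−(n+t)) : 0 ≤ t < m}`. -/
def bdryAug {B : Type*} {r : ℕ} (φL : B → ℝ → ℂ) (φ : Fin r → ℝ → ℂ) (n : ℤ) (m : ℕ) :
    (B ⊕ Fin r × Fin m) → ℝ → ℂ
  | Sum.inl i => φL i
  | Sum.inr (i, t) => fun x => φ i (x - ((n + (t : ℕ) : ℤ) : ℝ))

/-- index set of the system `AS_J(Φ;Ψ)_{[0,∞)}`. -/
abbrev ASIdxH (A B : Type*) (J : ℤ) := A ⊕ ({j : ℤ // J ≤ j} × B)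

/-- the system `AS_J(Φ;Ψ)_{[0,∞)} = {2^{J/2}h(2^J·) : h ∈ Φ} ∪ {2^{j/2}η(2^j·) : j ≥ J, η ∈ Ψ}`. -/
def ASH {A B : Type*} (Φ : A → ℝ → ℂ) (Ψ : B → ℝ → ℂ) (J : ℤ) : ASIdxH A B J → ℝ → ℂ
  | Sum.inl a => dil J (Φ a)
  | Sum.inr (j, b) => dil j.1 (Ψ b)

/-- nonstationary system `AS_J(Φ_J;{Ψ_j}_{j≥J})` where the scale `J+n` uses the family `Ψ n`. -/
def ASHns {A : Type*} {B : ℕ → Type*} (Φ : A → ℝ → ℂ) (Ψ : ∀ n, B n → ℝ → ℂ) (J : ℤ) :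
    (A ⊕ (Σ n : ℕ, B n)) → ℝ → ℂ
  | Sum.inl a => dil J (Φ a)
  | Sum.inr ⟨n, b⟩ => dil (J + (n : ℤ)) (Ψ n b)

/-- the Fourier series `û(ξ) = ∑_k u(k) e^{−ikξ}` of a finitely supported matrix filter. -/
def fhat {r : ℕ} (a : ℤ → Matrix (Fin r) (Fin r) ℂ) (ξ : ℝ) : Matrix (Fin r) (Fin r) ℂ :=
  ∑ᶠ k : ℤ, Complex.exp (-(Complex.I * (k : ℂ) * (ξ : ℂ))) • a k

/-- the shift `η(·−k₀)` is supported in `[0,∞)` and satisfies the one-sided refinement relation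
`η(·−k₀) = 2 ∑_{k≥n} u(k−2k₀) φ(2·−k)`. -/
def shiftRef {r : ℕ} (η φ : Fin r → ℝ → ℂ) (u : ℤ → Matrix (Fin r) (Fin r) ℂ)
    (n k₀ : ℤ) : Prop :=
  ∀ i : Fin r, (∀ᵐ (x : ℝ) ∂volume, x < 0 → η i (x - (k₀ : ℝ)) = 0) ∧
    ∀ᵐ (x : ℝ) ∂volume,
      η i (x - (k₀ : ℝ)) = 2 * filtSumGe (fun k => u (k - 2 * k₀)) φ n i (2 * x)

/-- the partial sums `∑_{i∈s} c_i F_i` converge (as a net over finite subsets) to `f` in `L²`. -/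
def L2LimTo {I : Type*} (c : I → ℂ) (F : I → ℝ → ℂ) (f : ℝ → ℂ) : Prop :=
  ∀ ε > (0 : ℝ), ∃ s₀ : Finset I, ∀ s : Finset I, s₀ ⊆ s →
    nsq (fun x => f x - ∑ i ∈ s, c i * F i x) < ε ^ 2

/-- `p(d/dx) f(x) |_{x=0}` with one-sided (right) derivatives at `0`. -/
def pD (p : Polynomial ℂ) (f : ℝ → ℂ) : ℂ :=
  ∑ n ∈ Finset.range (p.natDegree + 1),
    p.coeff n * iteratedDerivWithin n f (Set.Ici (0 : ℝ)) 0

/-- Riesz sequence in an abstract Hilbert space. -/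
def RieszSeqH {H : Type*} [NormedAddCommGroup H] [InnerProductSpace ℂ H]
    {I : Type*} (h : I → H) : Prop :=
  ∃ C > (0 : ℝ), ∀ c : I →₀ ℂ,
    C⁻¹ * (∑ i ∈ c.support, ‖c i‖ ^ 2) ≤ ‖∑ i ∈ c.support, c i • h i‖ ^ 2 ∧
      ‖∑ i ∈ c.support, c i • h i‖ ^ 2 ≤ C * (∑ i ∈ c.support, ‖c i‖ ^ 2)

/-- Bessel sequence in an abstract Hilbert space. -/
def BesselH {H : Type*} [NormedAddCommGroup H] [InnerProductSpace ℂ H]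
    {I : Type*} (h : I → H) : Prop :=
  ∃ C > (0 : ℝ), ∀ f : H, (∑' i : I, ‖(inner ℂ f (h i) : ℂ)‖ ^ 2) ≤ C * ‖f‖ ^ 2

/-- reindexing of `Φ = {φ^L}∪{φ(·−k):k≥n}` splitting off the shifts `n ≤ k < nt` into the
boundary block. -/
def phiReindex {p r : ℕ} (n nt : ℤ) (h : n ≤ nt) :
    HIdx (Fin p) r n → HIdx (Fin p ⊕ Fin r × Fin (nt - n).toNat) r nt
  | Sum.inl i => Sum.inl (Sum.inl i)
  | Sum.inr (i, k) =>
      if hk : nt ≤ k.1 then Sum.inr (i, ⟨k.1, hk⟩)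
      else Sum.inl (Sum.inr (i, ⟨(k.1 - n).toNat, by
        have hnk := k.2; omega⟩))

/-- embedding of the boundary block `{ψ^L}∪{ψ(·−(n+t)) : t < m}` into `{ψ^L}∪{ψ(·−k):k≥n}`. -/
def embBdry {q r : ℕ} (n : ℤ) (m : ℕ) :
    (Fin q ⊕ Fin r × Fin m) → HIdx (Fin q) r n
  | Sum.inl i => Sum.inl i
  | Sum.inr (i, t) => Sum.inr (i, ⟨n + (t : ℕ), by omega⟩)

/-- A compactly supported biorthogonal (multi)wavelet in `L²(ℝ)` together with a finitely
supported biorthogonal wavelet filter bank, as in Theorem `thm:bw` of the paper. -/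
structure BiorthWaveletFB (r : ℕ) where
  φ : Fin r → ℝ → ℂ
  ψ : Fin r → ℝ → ℂ
  tφ : Fin r → ℝ → ℂ
  tψ : Fin r → ℝ → ℂ
  a : ℤ → Matrix (Fin r) (Fin r) ℂ
  b : ℤ → Matrix (Fin r) (Fin r) ℂ
  ta : ℤ → Matrix (Fin r) (Fin r) ℂ
  tb : ℤ → Matrix (Fin r) (Fin r) ℂ
  memL2 : ∀ i, MemL2 (φ i) ∧ MemL2 (ψ i) ∧ MemL2 (tφ i) ∧ MemL2 (tψ i)
  cpt : ∀ i, CptSupp (φ i) ∧ CptSupp (ψ i) ∧ CptSupp (tφ i) ∧ CptSupp (tψ i)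
  fin_a : FinSupp a
  fin_b : FinSupp b
  fin_ta : FinSupp ta
  fin_tb : FinSupp tb
  ref_φ : ∀ i, ∀ᵐ (x : ℝ) ∂volume, φ i x = 2 * filtSum a φ i (2 * x)
  ref_ψ : ∀ i, ∀ᵐ (x : ℝ) ∂volume, ψ i x = 2 * filtSum b φ i (2 * x)
  ref_tφ : ∀ i, ∀ᵐ (x : ℝ) ∂volume, tφ i x = 2 * filtSum ta tφ i (2 * x)
  ref_tψ : ∀ i, ∀ᵐ (x : ℝ) ∂volume, tψ i x = 2 * filtSum tb tφ i (2 * x)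
  biorth_shift : ∀ k : ℤ, ∀ i j : Fin r,
    inn (φ i) (fun x => tφ j (x - (k : ℝ))) = if k = 0 ∧ i = j then 1 else 0
  pr₁ : ∀ ξ : ℝ,
    fhat ta ξ * (fhat a ξ)ᴴ + fhat ta (ξ + Real.pi) * (fhat a (ξ + Real.pi))ᴴ = 1
  pr₂ : ∀ ξ : ℝ,
    fhat ta ξ * (fhat b ξ)ᴴ + fhat ta (ξ + Real.pi) * (fhat b (ξ + Real.pi))ᴴ = 0
  pr₃ : ∀ ξ : ℝ,
    fhat tb ξ * (fhat a ξ)ᴴ + fhat tb (ξ + Real.pi) * (fhat a (ξ + Real.pi))ᴴ = 0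
  pr₄ : ∀ ξ : ℝ,
    fhat tb ξ * (fhat b ξ)ᴴ + fhat tb (ξ + Real.pi) * (fhat b (ξ + Real.pi))ᴴ = 1
  rieszR : RieszBasisR (ASR φ ψ)
  rieszRt : RieszBasisR (ASR tφ tψ)
  biorthAS : Biorth (ASR φ ψ) (ASR tφ tψ)

/-- A compactly supported biorthogonal (multi)wavelet in `L²(ℝ)` (no filter bank data). -/
structure BiorthWavelet (r : ℕ) where
  φ : Fin r → ℝ → ℂ
  ψ : Fin r → ℝ → ℂ
  tφ : Fin r → ℝ → ℂ
  tψ : Fin r → ℝ → ℂ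
  memL2 : ∀ i, MemL2 (φ i) ∧ MemL2 (ψ i) ∧ MemL2 (tφ i) ∧ MemL2 (tψ i)
  cpt : ∀ i, CptSupp (φ i) ∧ CptSupp (ψ i) ∧ CptSupp (tφ i) ∧ CptSupp (tψ i)
  rieszR : RieszBasisR (ASR φ ψ)
  rieszRt : RieszBasisR (ASR tφ tψ)
  biorthAS : Biorth (ASR φ ψ) (ASR tφ tψ)


/-
The refinement equation at `x - n` expresses `φ(x - n)` as `2 ∑_k a(k - 2n) φ(2x - k)`. For a
fixed `x` only the finitely many `k` with `2x - k ∈ [l_φ, h_φ]` contribute. When `x > 0` the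
terms with `k ≤ -h_φ` vanish, so the sum splits into the block `1 - h_φ ≤ k < n_φ` and the tail
`k ≥ n_φ`; when `x < 0` every term of the tail vanishes because `2x - k < -n_φ ≤ l_φ`.
-/

lemma ae_comp_mul_sub {p : ℝ → Prop} (h : ∀ᵐ y, p y) {c : ℝ} (hc : c ≠ 0) (b : ℝ) :
    ∀ᵐ x, p (c * x - b) :=
  ((measurePreserving_sub_right volume b).quasiMeasurePreserving.comp
    (Measure.quasiMeasurePreserving_smul volume hc)).ae h

lemma ae_comp_sub {p : ℝ → Prop} (h : ∀ᵐ y, p y) (b : ℝ) : ∀ᵐ x, p (x - b) := by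
  simpa using ae_comp_mul_sub h one_ne_zero b

lemma VanishOutside.ae_eq_zero_of_neg {f : ℝ → ℂ} {l h : ℤ} (hf : VanishOutside f l h)
    {k : ℤ} (hk : -l ≤ k) : ∀ᵐ x, x < 0 → f (x - k) = 0 := by
  filter_upwards [ae_comp_sub hf k] with x hx hneg
  refine hx fun hmem => ?_
  have : -(l : ℝ) ≤ k := by exact_mod_cast hk
  linarith [hmem.1]

lemma ae_forall_eq_zero_of_vanishOutside {ι : Type*} [Countable ι] {f : ι → ℝ → ℂ} {l h : ℤ}
    (hf : ∀ i, VanishOutside (f i) l h) {c : ℝ} (hc : c ≠ 0) :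
    ∀ᵐ x, ∀ i (k : ℤ), c * x - k ∉ Set.Icc (l : ℝ) h → f i (c * x - k) = 0 := by
  simp only [ae_all_iff]
  exact fun i k => ae_comp_mul_sub (hf i) hc k

lemma finsum_eq_sum_Ico_add_finsum_ge {M : Type*} [AddCommMonoid M] {g : ℤ → M}
    (hg : g.support.Finite) {m : ℤ} (hm : ∀ k < m, g k = 0) (N : ℤ) :
    ∑ᶠ k, g k = ∑ k ∈ Finset.Ico m N, g k + ∑ᶠ (k) (_ : N ≤ k), g k := by
  have hlow : ∑ᶠ k ∈ Set.Iio N, g k = ∑ k ∈ Finset.Ico m N, g k := by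
    refine finsum_mem_eq_sum_of_subset g (fun k ⟨hkN, hk⟩ => ?_) fun k hk => ?_
    · simp only [Finset.coe_Ico, Set.mem_Ico]
      exact ⟨not_lt.1 fun hkm => hk (hm k hkm), hkN⟩
    · exact (Finset.mem_Ico.1 hk).2
  rw [← finsum_mem_univ, ← Set.Iio_union_Ici, finsum_mem_union' (Set.Iio_disjoint_Ici le_rfl)
    (hg.subset Set.inter_subset_right) (hg.subset Set.inter_subset_right), hlow]
  rfl

section filtSum

variable {B : Type*} {r : ℕ} (A : ℤ → Matrix B (Fin r) ℂ) (φ : Fin r → ℝ → ℂ) (i : B)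

lemma filtSum_sub_intCast (y : ℝ) (m : ℤ) :
    filtSum A φ i (y - m) = filtSum (fun k => A (k - m)) φ i y := by
  unfold filtSum
  rw [← finsum_comp_equiv (Equiv.subRight m)]
  refine finsum_congr fun k => ?_
  simp only [Equiv.subRight_apply, Int.cast_sub]
  ring_nf

variable {A φ} {l h : ℤ} {y : ℝ}
  (hvan : ∀ j (k : ℤ), y - k ∉ Set.Icc (l : ℝ) h → φ j (y - k) = 0)
include hvan

lemma filtSumGe_eq_zero_of_neg (hy : y < 0) {N : ℤ} (hN : -l ≤ N) :
    filtSumGe A φ N i y = 0 := by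
  refine finsum_mem_eq_zero_of_forall_eq_zero (s := Set.Ici N) fun k hk =>
    Finset.sum_eq_zero fun j _ => ?_
  have : -(l : ℝ) ≤ k := by exact_mod_cast hN.trans (Set.mem_Ici.1 hk)
  rw [hvan j k fun hmem => by linarith [hmem.1], mul_zero]

lemma support_filtSum_summand_finite :
    (Function.support fun k : ℤ => ∑ j, A k i j * φ j (y - k)).Finite := by
  refine (Finset.Icc ⌈y - h⌉ ⌊y - l⌋).finite_toSet.subset fun k hk => ?_
  by_contra hout
  refine hk (Finset.sum_eq_zero fun j _ => ?_)
  rw [hvan j k fun hmem => hout ?_, mul_zero]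
  simp only [Finset.coe_Icc, Set.mem_Icc, Int.ceil_le, Int.le_floor]
  constructor <;> linarith [hmem.1, hmem.2]

lemma filtSum_eq_sum_Icc_add_filtSumGe (hy : 0 < y) (N : ℤ) :
    filtSum A φ i y =
      ∑ k ∈ Finset.Icc (1 - h) (N - 1), ∑ j, A k i j * φ j (y - k) + filtSumGe A φ N i y := by
  rw [Finset.Icc_sub_one_right_eq_Ico]
  refine finsum_eq_sum_Ico_add_finsum_ge (support_filtSum_summand_finite i hvan)
    (fun k hk => Finset.sum_eq_zero fun j _ => ?_) N
  have : (k : ℝ) ≤ -h := by exact_mod_cast (by omega : k ≤ -h)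
  rw [hvan j k fun hmem => by linarith [hmem.2], mul_zero]

end filtSum

theorem truncated_shifts_refinement_general
    {r : ℕ} (φ : Fin r → ℝ → ℂ)
    (a : ℤ → Matrix (Fin r) (Fin r) ℂ)
    (lφ hφ la : ℤ) (hfsφ : IsFS φ lφ hφ)
    (href : ∀ i, ∀ᵐ (x : ℝ) ∂volume, φ i x = 2 * filtSum a φ i (2 * x))
    (nφ : ℤ) (hnφ : -lφ ≤ nφ ∧ -la ≤ nφ) :
    (∀ k : ℤ, nφ ≤ k → ∀ i, ∀ᵐ (x : ℝ) ∂volume, x < 0 → φ i (x - (k : ℝ)) = 0) ∧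
    ∀ n : ℤ, 1 - hφ ≤ n → n ≤ nφ - 1 → ∀ i, ∀ᵐ (x : ℝ) ∂volume,
      (if 0 ≤ x then φ i (x - (n : ℝ)) else 0) =
        2 * (∑ k ∈ Finset.Icc (1 - hφ) (nφ - 1), ∑ j,
              a (k - 2 * n) i j * (if 0 ≤ 2 * x then φ j (2 * x - (k : ℝ)) else 0)) +
        2 * filtSumGe (fun k => a (k - 2 * n)) φ nφ i (2 * x) := by
  refine ⟨fun k hk i => (hfsφ.1 i).ae_eq_zero_of_neg (hnφ.1.trans hk), fun n _ _ i => ?_⟩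
  filter_upwards [ae_comp_sub (href i) n, ae_forall_eq_zero_of_vanishOutside hfsφ.1 two_ne_zero,
    volume.ae_ne 0] with x hrefx hsupp hx0
  have hshift : 2 * (x - n) = 2 * x - ((2 * n : ℤ) : ℝ) := by push_cast; ring
  rw [hrefx, hshift, filtSum_sub_intCast]
  rcases hx0.lt_or_gt with hneg | hpos
  · have h2neg : ¬ 0 ≤ 2 * x := by linarith
    simp [hneg.not_ge, h2neg, filtSumGe_eq_zero_of_neg i hsupp (by linarith) hnφ.1]
  · have h2pos : 0 ≤ 2 * x := by linarith
    simp only [hpos.le, h2pos, if_true]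
    rw [filtSum_eq_sum_Icc_add_filtSumGe i hsupp (by linarith) nφ, mul_add]

/-- one-sided refinement relation for the truncated shifts
`φ(·−n)χ_{[0,∞)}`, `1−h_φ ≤ n ≤ n_φ−1`, of a refinable vector function. -/
theorem truncated_shifts_refinement
    {r : ℕ} (φ : Fin r → ℝ → ℂ) (hL2 : ∀ i, MemL2 (φ i))
    (a : ℤ → Matrix (Fin r) (Fin r) ℂ) (hfin : FinSupp a)
    (lφ hφ la ha : ℤ) (hfsφ : IsFS φ lφ hφ) (hfsa : IsFSfilter a la ha)
    (href : ∀ i, ∀ᵐ (x : ℝ) ∂volume, φ i x = 2 * filtSum a φ i (2 * x))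
    (nφ : ℤ) (hnφ : -lφ ≤ nφ ∧ -la ≤ nφ) :
    (∀ k : ℤ, nφ ≤ k → ∀ i, ∀ᵐ (x : ℝ) ∂volume, x < 0 → φ i (x - (k : ℝ)) = 0) ∧
    ∀ n : ℤ, 1 - hφ ≤ n → n ≤ nφ - 1 → ∀ i, ∀ᵐ (x : ℝ) ∂volume,
      (if 0 ≤ x then φ i (x - (n : ℝ)) else 0) =
        2 * (∑ k ∈ Finset.Icc (1 - hφ) (nφ - 1), ∑ j,
              a (k - 2 * n) i j * (if 0 ≤ 2 * x then φ j (2 * x - (k : ℝ)) else 0)) +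
        2 * filtSumGe (fun k => a (k - 2 * n)) φ nφ i (2 * x) :=
  truncated_shifts_refinement_general φ a lφ hφ la hfsφ href nφ hnφ

end Wavelets
end
end

section
/- Let φ be an r×1 vector of compactly supported functions in L²(ℝ) satisfying φ = 2∑_{k∈ℤ}a(k)φ(2·−k) a.e. for a finitely supported a:ℤ→ℂ^{r×r}, and let n_φ ≥ max(−l_φ,−l_a) be an integer, where [l_φ,h_φ]:=fs(φ) and [l_a,h_a]:=fs(a). Let j₀,…,j_ℓ be nonnegative integers and p(x) := (x^{j₀},…,x^{j_ℓ})ᵀ. Suppose there exists a sequence of matrices p_v:ℤ→ℂ^{(ℓ+1)×r} such that the polynomial reproduction identity p(x) = ∑_{k∈ℤ} p_v(k)·φ(x−k) holds for a.e. x∈ℝ (the sum being locally finite since φ is compactly supported). Define φ^p := p·χ_{[0,∞)} − ∑_{k≥n_φ} p_v(k)·φ(·−k) and A_{L_p} := diag(2^{−1−j₀},…,2^{−1−j_ℓ}). Then φ^p is supported in [0,∞) and satisfies φ^p = 2A_{L_p}·φ^p(2·) + 2∑_{k≥n_φ} A_p(k)·φ(2·−k) a.e., where A_p(k) := A_{L_p}·p_v(k)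 − ∑_{n≥n_φ} p_v(n)·a(k−2n) (a finite sum for each k, and the sum over k is locally finite). -/
open MeasureTheory Matrix Finset Filter

noncomputable section

namespace Wavelets

/-!
Since `φ` vanishes left of `l_φ` and `n_φ ≥ -l_φ`, the truncated sum `∑_{k ≥ n_φ} p_v(k) φ(· - k)`
vanishes on `(-∞, 0)`. Expanding each `φ(· - n)`, `n ≥ n_φ`, by the refinement equation gives
`∑_{n ≥ n_φ} p_v(n) φ(x - n) = 2 ∑_{k ≥ n_φ} (∑_{n ≥ n_φ} p_v(n) a(k - 2n)) φ(2x - k)`: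
the terms with `k < n_φ` drop out because `a(k - 2n) ≠ 0` forces `k ≥ l_a + 2n ≥ n_φ`.
Together with `x^j χ_{[0,∞)}(x) = 2 · 2^{-1-j} (2x)^j χ_{[0,∞)}(2x)` this is the claimed relation.
At each point all sums are finite, so they are handled as sums over `[n_φ, K]` for a large `K`.
-/

lemma finsum_ge_eq_sum_Icc {M : Type*} [AddCommMonoid M] {f : ℤ → M} {n K : ℤ}
    (hf : ∀ k, K < k → f k = 0) : ∑ᶠ (k : ℤ) (_ : n ≤ k), f k = ∑ k ∈ Icc n K, f k :=
  finsum_cond_eq_sum_of_cond_iff f fun {k} hk => by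
    have : k ≤ K := not_lt.1 fun h => hk (hf k h)
    simp [this]

lemma ae_forall_sub_intCast {p : ℝ → Prop} (h : ∀ᵐ y, p y) : ∀ᵐ x, ∀ k : ℤ, p (x - k) :=
  ae_all_iff.2 fun k => (measurePreserving_sub_right volume (k : ℝ)).quasiMeasurePreserving.ae h

lemma ae_comp_const_mul {p : ℝ → Prop} {c : ℝ} (hc : c ≠ 0) (h : ∀ᵐ y, p y) :
    ∀ᵐ x : ℝ, p (c * x) := by
  simpa using (Measure.quasiMeasurePreserving_smul volume hc).ae h

lemma truncPow_eq_two_mul_zpow_mul_truncPow (j : ℕ) (x : ℝ) :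
    (if 0 ≤ x then (x : ℂ) ^ j else 0) =
      2 * (2 : ℂ) ^ (-(1 + (j : ℤ))) * (if 0 ≤ 2 * x then ((2 * x : ℝ) : ℂ) ^ j else 0) := by
  have h2 : (2 : ℂ) ^ (-(1 + (j : ℤ))) = ((2 : ℂ) ^ j)⁻¹ / 2 := by
    rw [_root_.zpow_neg, zpow_add₀ two_ne_zero, zpow_one, zpow_natCast, mul_inv, div_eq_mul_inv,
      mul_comm]
  split_ifs with hx h2x h2x
  · rw [h2]; push_cast; field_simp; ring
  · exact absurd (by linarith) h2x
  · exact absurd (by linarith) hx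
  · simp

section FilterSums

variable {B : Type*} {r : ℕ} {φ : Fin r → ℝ → ℂ} {K : ℤ} {y : ℝ}

lemma filtSumGe_eq_sum_Icc (hφ : ∀ k, K < k → ∀ j, φ j (y - k) = 0)
    (A : ℤ → Matrix B (Fin r) ℂ) (n : ℤ) (i : B) :
    filtSumGe A φ n i y = ∑ k ∈ Icc n K, ∑ j, A k i j * φ j (y - k) :=
  finsum_ge_eq_sum_Icc fun k hk => Finset.sum_eq_zero fun j _ => by rw [hφ k hk j, mul_zero]

lemma filtSumGe_eq_zero {n : ℤ} (hφ : ∀ k, n ≤ k → ∀ j, φ j (y - k) = 0)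
    (A : ℤ → Matrix B (Fin r) ℂ) (i : B) : filtSumGe A φ n i y = 0 := by
  rw [filtSumGe_eq_sum_Icc (K := n - 1) (fun k hk => hφ k (by omega)),
    Finset.Icc_eq_empty (by omega), Finset.sum_empty]

lemma finite_support_filtSumGe_term (hφ : ∀ k, K < k → ∀ j, φ j (y - k) = 0)
    (A : ℤ → Matrix B (Fin r) ℂ) (n : ℤ) (i : B) :
    (Function.support fun k : ℤ =>
      if n ≤ k then ∑ j, A k i j * φ j (y - k) else 0).Finite := by
  refine (Set.finite_Icc n K).subset fun k hk => ⟨?_, ?_⟩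
  · by_contra h
    exact hk (if_neg h)
  · by_contra h
    exact hk (by simp only [hφ k (not_le.1 h), mul_zero, Finset.sum_const_zero, ite_self])

lemma filtSumGe_eq_mul_sub {A A₁ A₂ : ℤ → Matrix B (Fin r) ℂ} {c : ℂ} {i : B}
    (hφ : ∀ k, K < k → ∀ j, φ j (y - k) = 0) (hA : ∀ k j, A k i j = c * A₁ k i j - A₂ k i j)
    (n : ℤ) :
    filtSumGe A φ n i y = c * filtSumGe A₁ φ n i y - filtSumGe A₂ φ n i y := by
  simp only [filtSumGe_eq_sum_Icc hφ, hA, sub_mul, mul_assoc, Finset.sum_sub_distrib,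
    Finset.mul_sum]

end FilterSums

section Subdivision

variable {B : Type*} {r : ℕ} {φ : Fin r → ℝ → ℂ} {a : ℤ → Matrix (Fin r) (Fin r) ℂ}
  {la K : ℤ} {x : ℝ}

/-- The term subtracted in the paper's `A_p(k)`. -/
def subdivGe (v : ℤ → Matrix B (Fin r) ℂ) (a : ℤ → Matrix (Fin r) (Fin r) ℂ) (n₀ : ℤ) :
    ℤ → Matrix B (Fin r) ℂ :=
  fun k i j => ∑ᶠ (n : ℤ) (_ : n₀ ≤ n), ∑ j', v n i j' * a (k - 2 * n) j' j

lemma subdivGe_eq_sum_Icc (ha : ∀ m < la, a m = 0) (hK : -la ≤ K) {k : ℤ} (hk : k ≤ K)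
    (v : ℤ → Matrix B (Fin r) ℂ) (n₀ : ℤ) (i : B) (j : Fin r) :
    subdivGe v a n₀ k i j = ∑ n ∈ Icc n₀ K, ∑ j', v n i j' * a (k - 2 * n) j' j :=
  finsum_ge_eq_sum_Icc fun n hn =>
    Finset.sum_eq_zero fun j' _ => by rw [ha _ (by omega), Matrix.zero_apply, mul_zero]

lemma filtSum_two_mul_sub (i : Fin r) (n : ℤ) :
    filtSum a φ i (2 * (x - n)) = ∑ᶠ k : ℤ, ∑ j, a (k - 2 * n) i j * φ j (2 * x - k) := by
  rw [filtSum, ← finsum_comp_equiv (Equiv.subRight (2 * n))]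
  refine finsum_congr fun k => Finset.sum_congr rfl fun j _ => ?_
  simp only [Equiv.subRight_apply]
  push_cast
  ring_nf

lemma filtSum_two_mul_sub_eq_sum_Icc (ha : ∀ m < la, a m = 0)
    (hφ : ∀ k, K < k → ∀ j, φ j (2 * x - k) = 0) {n₀ n : ℤ} (hn : n₀ ≤ la + 2 * n) (i : Fin r) :
    filtSum a φ i (2 * (x - n)) = ∑ k ∈ Icc n₀ K, ∑ j, a (k - 2 * n) i j * φ j (2 * x - k) := by
  rw [filtSum_two_mul_sub]
  refine finsum_eq_sum_of_support_subset _ fun k hk => ?_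
  obtain ⟨j, -, hj⟩ := Finset.exists_ne_zero_of_sum_ne_zero hk
  have hak : la ≤ k - 2 * n := not_lt.1 fun h => hj (by rw [ha _ h, Matrix.zero_apply, zero_mul])
  have hkK : k ≤ K := not_lt.1 fun h => hj (by rw [hφ k h j, mul_zero])
  simp only [Finset.coe_Icc, Set.mem_Icc]
  omega

lemma sum_mul_const_mul_sum_comm {R ι κ α β : Type*} [CommSemiring R] [Fintype α] [Fintype β]
    (s : Finset ι) (t : Finset κ) (c : R) (u : ι → α → R) (w : ι → α → κ → β → R)
    (f : κ → β → R) :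
    ∑ n ∈ s, ∑ j', u n j' * (c * ∑ k ∈ t, ∑ j, w n j' k j * f k j) =
      c * ∑ k ∈ t, ∑ j, (∑ n ∈ s, ∑ j', u n j' * w n j' k j) * f k j := by
  simp only [Finset.mul_sum, Finset.sum_mul]
  refine (Finset.sum_congr rfl fun n _ => Finset.sum_comm).trans ?_
  refine Finset.sum_comm.trans (Finset.sum_congr rfl fun k _ => ?_)
  refine (Finset.sum_congr rfl fun n _ => Finset.sum_comm).trans ?_
  refine Finset.sum_comm.trans (Finset.sum_congr rfl fun j _ => ?_)
  refine Finset.sum_congr rfl fun n _ => Finset.sum_congr rfl fun j' _ => ?_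
  ring

/-- No boundary term appears: `a(k - 2n) = 0` for `k < n₀ ≤ la + 2n` when `n ≥ n₀ ≥ -la`. -/
lemma filtSumGe_eq_two_mul_filtSumGe_subdivGe (ha : ∀ m < la, a m = 0) {n₀ : ℤ}
    (hn₀ : -la ≤ n₀) (hK : -la ≤ K) (hφ₁ : ∀ k, K < k → ∀ j, φ j (x - k) = 0)
    (hφ₂ : ∀ k, K < k → ∀ j, φ j (2 * x - k) = 0)
    (href : ∀ (n : ℤ) j, φ j (x - n) = 2 * filtSum a φ j (2 * (x - n)))
    (v : ℤ → Matrix B (Fin r) ℂ) (i : B) :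
    filtSumGe v φ n₀ i x = 2 * filtSumGe (subdivGe v a n₀) φ n₀ i (2 * x) := by
  rw [filtSumGe_eq_sum_Icc hφ₁, filtSumGe_eq_sum_Icc hφ₂]
  calc ∑ n ∈ Icc n₀ K, ∑ j', v n i j' * φ j' (x - n)
      = ∑ n ∈ Icc n₀ K, ∑ j', v n i j' *
          (2 * ∑ k ∈ Icc n₀ K, ∑ j, a (k - 2 * n) j' j * φ j (2 * x - k)) := by
        refine Finset.sum_congr rfl fun n hn => Finset.sum_congr rfl fun j' _ => ?_
        rw [href, filtSum_two_mul_sub_eq_sum_Icc ha hφ₂ (n₀ := n₀) (by simp at hn; omega)]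
    _ = 2 * ∑ k ∈ Icc n₀ K, ∑ j,
          (∑ n ∈ Icc n₀ K, ∑ j', v n i j' * a (k - 2 * n) j' j) * φ j (2 * x - k) :=
        sum_mul_const_mul_sum_comm _ _ _ _ _ _
    _ = 2 * ∑ k ∈ Icc n₀ K, ∑ j, subdivGe v a n₀ k i j * φ j (2 * x - k) := by
        congr 1
        refine Finset.sum_congr rfl fun k hk => Finset.sum_congr rfl fun j _ => ?_
        rw [subdivGe_eq_sum_Icc ha hK (Finset.mem_Icc.1 hk).2]

end Subdivision

lemma boundary_refinement_at {B : Type*} {r : ℕ} {φ : Fin r → ℝ → ℂ}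
    {a : ℤ → Matrix (Fin r) (Fin r) ℂ} {l la n₀ : ℤ} {x : ℝ} (ha : ∀ m < la, a m = 0)
    (hn₀ : -la ≤ n₀) (hv₁ : ∀ (k : ℤ) j, x - k < l → φ j (x - k) = 0)
    (hv₂ : ∀ (k : ℤ) j, 2 * x - k < l → φ j (2 * x - k) = 0)
    (href : ∀ (n : ℤ) j, φ j (x - n) = 2 * filtSum a φ j (2 * (x - n)))
    (v A : ℤ → Matrix B (Fin r) ℂ) (i : B) (p : ℕ)
    (hA : ∀ k j, A k i j = (2 : ℂ) ^ (-(1 + (p : ℤ))) * v k i j - subdivGe v a n₀ k i j) :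
    (Function.support fun k : ℤ =>
        if n₀ ≤ k then ∑ j, A k i j * φ j (2 * x - k) else 0).Finite ∧
      (if 0 ≤ x then (x : ℂ) ^ p else 0) - filtSumGe v φ n₀ i x =
        2 * (2 : ℂ) ^ (-(1 + (p : ℤ))) *
            ((if 0 ≤ 2 * x then ((2 * x : ℝ) : ℂ) ^ p else 0) - filtSumGe v φ n₀ i (2 * x)) +
          2 * filtSumGe A φ n₀ i (2 * x) := by
  obtain ⟨K, hK⟩ := exists_int_gt (max (-la : ℝ) (max (x - l) (2 * x - l)))
  simp only [max_lt_iff] at hK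
  have hKa : -la ≤ K := by exact_mod_cast hK.1.le
  have hφ₁ : ∀ k, K < k → ∀ j, φ j (x - k) = 0 := fun k hk j =>
    hv₁ k j (by linarith [(Int.cast_lt.2 hk : (K : ℝ) < k)])
  have hφ₂ : ∀ k, K < k → ∀ j, φ j (2 * x - k) = 0 := fun k hk j =>
    hv₂ k j (by linarith [(Int.cast_lt.2 hk : (K : ℝ) < k)])
  refine ⟨finite_support_filtSumGe_term hφ₂ A n₀ i, ?_⟩
  rw [filtSumGe_eq_mul_sub hφ₂ hA, truncPow_eq_two_mul_zpow_mul_truncPow p x,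
    filtSumGe_eq_two_mul_filtSumGe_subdivGe ha hn₀ hKa hφ₁ hφ₂ href]
  ring

theorem polynomial_boundary_refinement_general
    {r ℓ : ℕ} (φ : Fin r → ℝ → ℂ)
    (a : ℤ → Matrix (Fin r) (Fin r) ℂ)
    (lφ hφ la ha : ℤ) (hfsφ : IsFS φ lφ hφ) (hfsa : IsFSfilter a la ha)
    (href : ∀ i, ∀ᵐ (x : ℝ) ∂volume, φ i x = 2 * filtSum a φ i (2 * x))
    (nφ : ℤ) (hnφ : -lφ ≤ nφ ∧ -la ≤ nφ)
    (js : Fin (ℓ + 1) → ℕ)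
    (pv : ℤ → Matrix (Fin (ℓ + 1)) (Fin r) ℂ)
    (φp : Fin (ℓ + 1) → ℝ → ℂ)
    (hφp : φp = fun t (x : ℝ) => (if 0 ≤ x then (x : ℂ) ^ (js t) else 0) -
      ∑ᶠ (k : ℤ) (_ : nφ ≤ k), ∑ j, pv k t j * φ j (x - (k : ℝ)))
    (Ap : ℤ → Matrix (Fin (ℓ + 1)) (Fin r) ℂ)
    (hAp : Ap = fun k => fun t j =>
      (2 : ℂ) ^ (-(1 + (js t : ℤ))) * pv k t j -
        ∑ᶠ (n : ℤ) (_ : nφ ≤ n), ∑ j', pv n t j' * a (k - 2 * n) j' j) :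
    (∀ t, ∀ᵐ (x : ℝ) ∂volume, x < 0 → φp t x = 0) ∧
    ∀ t, ∀ᵐ (x : ℝ) ∂volume,
      (Function.support fun k : ℤ =>
        if nφ ≤ k then ∑ j, Ap k t j * φ j (2 * x - (k : ℝ)) else 0).Finite ∧
      φp t x = 2 * (2 : ℂ) ^ (-(1 + (js t : ℤ))) * φp t (2 * x) +
        2 * filtSumGe Ap φ nφ t (2 * x) := by
  have hφp' : ∀ t x, φp t x = (if 0 ≤ x then (x : ℂ) ^ js t else 0) - filtSumGe pv φ nφ t x :=
    fun t x => by rw [hφp]; rfl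
  have hAp' : ∀ t k j, Ap k t j =
      (2 : ℂ) ^ (-(1 + (js t : ℤ))) * pv k t j - subdivGe pv a nφ k t j :=
    fun t k j => by rw [hAp]; rfl
  have ha : ∀ m < la, a m = 0 := fun m hm => hfsa.1 m fun h => not_lt.2 h.1 hm
  have hφ0 : ∀ᵐ y : ℝ, ∀ j, y < lφ → φ j y = 0 :=
    ae_all_iff.2 fun j => (hfsφ.1 j).mono fun y hy hlt => hy fun h => not_lt.2 h.1 hlt
  have hv := ae_forall_sub_intCast hφ0
  refine ⟨fun t => ?_, fun t => ?_⟩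
  · filter_upwards [hv] with x hx hneg
    have hlφ : (-lφ : ℝ) ≤ nφ := by exact_mod_cast hnφ.1
    rw [hφp', if_neg (not_le.2 hneg), filtSumGe_eq_zero (fun k hk j => hx k j
      (by linarith [(Int.cast_le.2 hk : (nφ : ℝ) ≤ k)])) pv t, sub_zero]
  · filter_upwards [hv, ae_comp_const_mul two_ne_zero hv,
      ae_forall_sub_intCast (ae_all_iff.2 href)] with x h₁ h₂ h₃
    simp only [hφp']
    exact boundary_refinement_at ha hnφ.2 h₁ h₂ h₃ pv Ap t (js t) (hAp' t)

/-- the boundary function `φ^p := p·χ_{[0,∞)} − ∑_{k≥n_φ} p_v(k)φ(·−k)` obtained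
from a polynomial-reproduction identity is supported in `[0,∞)` and satisfies the one-sided
refinement relation `φ^p = 2A_{L_p} φ^p(2·) + 2∑_{k≥n_φ} A_p(k) φ(2·−k)`. -/
theorem polynomial_boundary_refinement
    {r ℓ : ℕ} (φ : Fin r → ℝ → ℂ) (hL2 : ∀ i, MemL2 (φ i))
    (a : ℤ → Matrix (Fin r) (Fin r) ℂ) (hfin : FinSupp a)
    (lφ hφ la ha : ℤ) (hfsφ : IsFS φ lφ hφ) (hfsa : IsFSfilter a la ha)
    (href : ∀ i, ∀ᵐ (x : ℝ) ∂volume, φ i x = 2 * filtSum a φ i (2 * x))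
    (nφ : ℤ) (hnφ : -lφ ≤ nφ ∧ -la ≤ nφ)
    (js : Fin (ℓ + 1) → ℕ)
    (pv : ℤ → Matrix (Fin (ℓ + 1)) (Fin r) ℂ)
    (hrepr : ∀ t : Fin (ℓ + 1), ∀ᵐ (x : ℝ) ∂volume,
      (Function.support fun k : ℤ => ∑ j, pv k t j * φ j (x - (k : ℝ))).Finite ∧
      (x : ℂ) ^ (js t) = ∑ᶠ k : ℤ, ∑ j, pv k t j * φ j (x - (k : ℝ)))
    (φp : Fin (ℓ + 1) → ℝ → ℂ)
    (hφp : φp = fun t (x : ℝ) => (if 0 ≤ x then (x : ℂ) ^ (js t) else 0) -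
      ∑ᶠ (k : ℤ) (_ : nφ ≤ k), ∑ j, pv k t j * φ j (x - (k : ℝ)))
    (Ap : ℤ → Matrix (Fin (ℓ + 1)) (Fin r) ℂ)
    (hAp : Ap = fun k => fun t j =>
      (2 : ℂ) ^ (-(1 + (js t : ℤ))) * pv k t j -
        ∑ᶠ (n : ℤ) (_ : nφ ≤ n), ∑ j', pv n t j' * a (k - 2 * n) j' j) :
    (∀ t, ∀ᵐ (x : ℝ) ∂volume, x < 0 → φp t x = 0) ∧
    ∀ t, ∀ᵐ (x : ℝ) ∂volume,
      (Function.support fun k : ℤ =>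
        if nφ ≤ k then ∑ j, Ap k t j * φ j (2 * x - (k : ℝ)) else 0).Finite ∧
      φp t x = 2 * (2 : ℂ) ^ (-(1 + (js t : ℤ))) * φp t (2 * x) +
        2 * filtSumGe Ap φ nφ t (2 * x) :=
  polynomial_boundary_refinement_general φ a lφ hφ la ha hfsφ hfsa href nφ hnφ js pv φp hφp Ap hAp

end Wavelets
end
end

section
/- Let s,t ≥ 1 be integers, A₀,A₁ ∈ ℂ^{s×s} and Ã₀,Ã₁ ∈ ℂ^{t×t} be matrices, and let v:ℝ→ℂ^s and w:ℝ→ℂ^t be vector functions whose components are square-integrable and vanish a.e. outside [0,1], satisfying v = 2A₀·v(2·) + 2A₁·v(2·−1) and w = 2Ã₀·w(2·) + 2Ã₁·w(2·−1) a.e. Then the t×s matrix M := ∫₀¹ w(x)·conj(v(x))ᵀ dx satisfies the functional equation M = 2Ã₀·M·A₀* + 2Ã₁·M·A₁*, where A* denotes the conjugate transpose of A. -/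
open MeasureTheory Matrix Finset Filter

noncomputable section

namespace Wavelets

/-! Since `v` and `w` vanish outside `[0,1]`, their `2·` parts live on `[0, 1/2]` and their
`2·-1` parts on `[1/2, 1]`. So after substituting both refinement equations into `w · v*`, the
mixed products vanish a.e., and the rest integrates, via `y = 2x` and `y = 2x - 1`, to
`2Ã₀MA₀* + 2Ã₁MA₁*`. -/

section Gram

variable {ι κ ι' κ' : Type*}

def gram (f : ι → ℝ → ℂ) (g : κ → ℝ → ℂ) : Matrix ι κ ℂ :=
  Matrix.of fun i j => inn (f i) (g j)

@[simp]
lemma gram_apply (f : ι → ℝ → ℂ) (g : κ → ℝ → ℂ) (i : ι) (j : κ) :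
    gram f g i j = inn (f i) (g j) :=
  rfl

def mulVecFam [Fintype κ] (B : Matrix ι κ ℂ) (f : κ → ℝ → ℂ) : ι → ℝ → ℂ :=
  fun i x => ∑ k, B i k * f k x

lemma MemL2.integrable_mul_conj {f g : ℝ → ℂ} (hf : MemL2 f) (hg : MemL2 g) :
    Integrable fun x => f x * starRingEnd ℂ (g x) :=
  hf.integrable_mul (Complex.conjCLE.toContinuousLinearMap.comp_memLp' hg) (p := 2) (q := 2)

lemma memL2_mulVecFam [Fintype κ] (B : Matrix ι κ ℂ) {f : κ → ℝ → ℂ}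
    (hf : ∀ k, MemL2 (f k)) (i : ι) : MemL2 (mulVecFam B f i) :=
  memLp_finsetSum _ fun k _ => (hf k).const_mul (B i k)

lemma ae_mulVecFam_eq_zero_of_notMem [Fintype κ] (B : Matrix ι κ ℂ) {f : κ → ℝ → ℂ}
    {S : Set ℝ} (hf : ∀ k, ∀ᵐ x ∂volume, x ∉ S → f k x = 0) (i : ι) :
    ∀ᵐ x ∂volume, x ∉ S → mulVecFam B f i x = 0 := by
  filter_upwards [ae_all_iff.2 hf] with x hx hxS
  simp [mulVecFam, hx _ hxS]

lemma gram_mulVecFam [Fintype ι] [Fintype κ] (B : Matrix ι' ι ℂ) (A : Matrix κ' κ ℂ)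
    {f : ι → ℝ → ℂ} {g : κ → ℝ → ℂ}
    (hfg : ∀ k l, Integrable fun x => f k x * starRingEnd ℂ (g l x)) :
    gram (mulVecFam B f) (mulVecFam A g) = B * gram f g * Aᴴ := by
  ext i j
  have hexpand : ∀ x, mulVecFam B f i x * starRingEnd ℂ (mulVecFam A g j x) =
      ∑ k, ∑ l, B i k * starRingEnd ℂ (A j l) * (f k x * starRingEnd ℂ (g l x)) := by
    intro x
    simp only [mulVecFam, map_sum, map_mul, Finset.sum_mul, Finset.mul_sum]
    rw [Finset.sum_comm]
    exact Finset.sum_congr rfl fun k _ => Finset.sum_congr rfl fun l _ => by ring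
  simp only [gram_apply, inn, hexpand, Matrix.mul_apply, Matrix.conjTranspose_apply,
    Finset.sum_mul]
  rw [integral_finsetSum _ fun k _ => integrable_finsetSum _ fun l _ => (hfg k l).const_mul _,
    Finset.sum_comm]
  refine Finset.sum_congr rfl fun k _ => ?_
  rw [integral_finsetSum _ fun l _ => (hfg k l).const_mul _]
  refine Finset.sum_congr rfl fun l _ => ?_
  rw [integral_const_mul, starRingEnd_apply]
  ring

end Gram

lemma inn_comp_two_mul_sub (f g : ℝ → ℂ) (b : ℝ) :
    inn (fun x => f (2 * x - b)) (fun x => g (2 * x - b)) = 2⁻¹ * inn f g := by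
  simp only [inn]
  rw [Measure.integral_comp_mul_left (fun y => f (y - b) * starRingEnd ℂ (g (y - b))) 2,
    integral_sub_right_eq_self (fun y => f y * starRingEnd ℂ (g y)) b]
  norm_num [Complex.real_smul]

lemma ae_comp_two_mul_sub {P : ℝ → Prop} (h : ∀ᵐ y ∂volume, P y) (b : ℝ) :
    ∀ᵐ x ∂volume, P (2 * x - b) :=
  ((measurePreserving_sub_right volume b).quasiMeasurePreserving.comp
    (Measure.quasiMeasurePreserving_smul volume two_ne_zero)).ae h

lemma ae_mul_conj_dyadic_halves {p q r u : ℝ → ℂ}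
    (hp : ∀ᵐ x ∂volume, x ∉ Set.Icc (0 : ℝ) 1 → p x = 0)
    (hq : ∀ᵐ x ∂volume, x ∉ Set.Icc (0 : ℝ) 1 → q x = 0)
    (hr : ∀ᵐ x ∂volume, x ∉ Set.Icc (0 : ℝ) 1 → r x = 0)
    (hu : ∀ᵐ x ∂volume, x ∉ Set.Icc (0 : ℝ) 1 → u x = 0) :
    ∀ᵐ x ∂volume, (p (2 * x) + q (2 * x - 1)) * starRingEnd ℂ (r (2 * x) + u (2 * x - 1)) =
      p (2 * x) * starRingEnd ℂ (r (2 * x)) + q (2 * x - 1) * starRingEnd ℂ (u (2 * x - 1)) := by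
  filter_upwards [ae_comp_two_mul_sub hp 0, ae_comp_two_mul_sub hq 1, ae_comp_two_mul_sub hr 0,
    ae_comp_two_mul_sub hu 1, volume.ae_ne (2⁻¹ : ℝ)] with x hpx hqx hrx hux hx
  simp only [sub_zero, Set.mem_Icc, not_and_or, not_le] at hpx hrx hqx hux
  rcases hx.lt_or_gt with hlt | hgt
  · rw [hqx (by left; linarith), hux (by left; linarith)]
    simp
  · rw [hpx (by right; linarith), hrx (by right; linarith)]
    simp

lemma inn_eq_of_dyadic_refinement {f g p q r u : ℝ → ℂ}
    (hf : ∀ᵐ x ∂volume, f x = 2 * p (2 * x) + 2 * q (2 * x - 1))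
    (hg : ∀ᵐ x ∂volume, g x = 2 * r (2 * x) + 2 * u (2 * x - 1))
    (hp : ∀ᵐ x ∂volume, x ∉ Set.Icc (0 : ℝ) 1 → p x = 0)
    (hq : ∀ᵐ x ∂volume, x ∉ Set.Icc (0 : ℝ) 1 → q x = 0)
    (hr : ∀ᵐ x ∂volume, x ∉ Set.Icc (0 : ℝ) 1 → r x = 0)
    (hu : ∀ᵐ x ∂volume, x ∉ Set.Icc (0 : ℝ) 1 → u x = 0)
    (hpr : Integrable fun x => p x * starRingEnd ℂ (r x))
    (hqu : Integrable fun x => q x * starRingEnd ℂ (u x)) :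
    inn f g = 2 * inn p r + 2 * inn q u := by
  have hsplit : (fun x => f x * starRingEnd ℂ (g x)) =ᵐ[volume] fun x =>
      4 * (p (2 * x - 0) * starRingEnd ℂ (r (2 * x - 0))) +
        4 * (q (2 * x - 1) * starRingEnd ℂ (u (2 * x - 1))) := by
    filter_upwards [hf, hg, ae_mul_conj_dyadic_halves hp hq hr hu] with x hfx hgx hx
    rw [hfx, hgx, ← mul_add, ← mul_add, map_mul, map_ofNat, mul_mul_mul_comm, hx, sub_zero]
    ring
  calc inn f g
    _ = 4 * inn (fun x => p (2 * x - 0)) (fun x => r (2 * x - 0)) +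
        4 * inn (fun x => q (2 * x - 1)) (fun x => u (2 * x - 1)) := by
      rw [inn, integral_congr_ae hsplit, integral_add, integral_const_mul, integral_const_mul]
      · rfl
      · exact ((hpr.comp_sub_right 0).comp_mul_left' two_ne_zero).const_mul 4
      · exact ((hqu.comp_sub_right 1).comp_mul_left' two_ne_zero).const_mul 4
    _ = 2 * inn p r + 2 * inn q u := by
      rw [inn_comp_two_mul_sub, inn_comp_two_mul_sub]
      ring

theorem gram_matrix_identity_general
    {s t : ℕ}
    (A0 A1 : Matrix (Fin s) (Fin s) ℂ) (tA0 tA1 : Matrix (Fin t) (Fin t) ℂ)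
    (v : Fin s → ℝ → ℂ) (w : Fin t → ℝ → ℂ)
    (hv2 : ∀ i, MemL2 (v i)) (hw2 : ∀ i, MemL2 (w i))
    (hvsupp : ∀ i, ∀ᵐ (x : ℝ) ∂volume, x ∉ Set.Icc (0 : ℝ) 1 → v i x = 0)
    (hwsupp : ∀ i, ∀ᵐ (x : ℝ) ∂volume, x ∉ Set.Icc (0 : ℝ) 1 → w i x = 0)
    (hrefv : ∀ i, ∀ᵐ (x : ℝ) ∂volume,
      v i x = 2 * ∑ i', A0 i i' * v i' (2 * x) + 2 * ∑ i', A1 i i' * v i' (2 * x - 1))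
    (hrefw : ∀ i, ∀ᵐ (x : ℝ) ∂volume,
      w i x = 2 * ∑ i', tA0 i i' * w i' (2 * x) + 2 * ∑ i', tA1 i i' * w i' (2 * x - 1))
    (M : Matrix (Fin t) (Fin s) ℂ)
    (hM : ∀ i j, M i j = ∫ x in Set.Icc (0 : ℝ) 1, w i x * (starRingEnd ℂ) (v j x)) :
    M = (2 : ℂ) • (tA0 * M * A0ᴴ) + (2 : ℂ) • (tA1 * M * A1ᴴ) := by
  have hwv k l := (hw2 k).integrable_mul_conj (hv2 l)
  have hM_gram : M = gram w v := Matrix.ext fun i j => by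
    rw [hM, gram_apply, inn]
    refine setIntegral_eq_integral_of_ae_compl_eq_zero ?_
    filter_upwards [hwsupp i] with x hx hxI
    rw [hx hxI, zero_mul]
  ext i j
  calc M i j = inn (w i) (v j) := by rw [hM_gram, gram_apply]
    _ = 2 * inn (mulVecFam tA0 w i) (mulVecFam A0 v j) +
        2 * inn (mulVecFam tA1 w i) (mulVecFam A1 v j) :=
      inn_eq_of_dyadic_refinement (hrefw i) (hrefv j)
        (ae_mulVecFam_eq_zero_of_notMem tA0 hwsupp i) (ae_mulVecFam_eq_zero_of_notMem tA1 hwsupp i)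
        (ae_mulVecFam_eq_zero_of_notMem A0 hvsupp j) (ae_mulVecFam_eq_zero_of_notMem A1 hvsupp j)
        ((memL2_mulVecFam tA0 hw2 i).integrable_mul_conj (memL2_mulVecFam A0 hv2 j))
        ((memL2_mulVecFam tA1 hw2 i).integrable_mul_conj (memL2_mulVecFam A1 hv2 j))
    _ = _ := by
      rw [← gram_apply, ← gram_apply, gram_mulVecFam _ _ hwv, gram_mulVecFam _ _ hwv, ← hM_gram]
      simp

/-- the Gram matrix of two refinable vector functions supported in `[0,1]`
satisfies the functional equation `M = 2Ã₀MA₀* + 2Ã₁MA₁*`. -/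
theorem gram_matrix_identity
    {s t : ℕ} (hs : 1 ≤ s) (ht : 1 ≤ t)
    (A0 A1 : Matrix (Fin s) (Fin s) ℂ) (tA0 tA1 : Matrix (Fin t) (Fin t) ℂ)
    (v : Fin s → ℝ → ℂ) (w : Fin t → ℝ → ℂ)
    (hv2 : ∀ i, MemL2 (v i)) (hw2 : ∀ i, MemL2 (w i))
    (hvsupp : ∀ i, ∀ᵐ (x : ℝ) ∂volume, x ∉ Set.Icc (0 : ℝ) 1 → v i x = 0)
    (hwsupp : ∀ i, ∀ᵐ (x : ℝ) ∂volume, x ∉ Set.Icc (0 : ℝ) 1 → w i x = 0)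
    (hrefv : ∀ i, ∀ᵐ (x : ℝ) ∂volume,
      v i x = 2 * ∑ i', A0 i i' * v i' (2 * x) + 2 * ∑ i', A1 i i' * v i' (2 * x - 1))
    (hrefw : ∀ i, ∀ᵐ (x : ℝ) ∂volume,
      w i x = 2 * ∑ i', tA0 i i' * w i' (2 * x) + 2 * ∑ i', tA1 i i' * w i' (2 * x - 1))
    (M : Matrix (Fin t) (Fin s) ℂ)
    (hM : ∀ i j, M i j = ∫ x in Set.Icc (0 : ℝ) 1, w i x * (starRingEnd ℂ) (v j x)) :
    M = (2 : ℂ) • (tA0 * M * A0ᴴ) + (2 : ℂ) • (tA1 * M * A1ᴴ) :=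
  gram_matrix_identity_general A0 A1 tA0 tA1 v w hv2 hw2 hvsupp hwsupp hrefv hrefw M hM

end Wavelets
end
end

section
/- Let H be a complex Hilbert space and let (φ_i)_{i∈I}, (φ̃_i)_{i∈I} and (ψ_j)_{j∈J} be countable families in H such that: (φ_i)_{i∈I} is a Riesz sequence; (φ̃_i)_{i∈I} is a Riesz sequence biorthogonal to (φ_i)_{i∈I}, i.e., ⟨φ_i,φ̃_{i'}⟩ = δ_{i,i'}; (ψ_j)_{j∈J} is a Riesz sequence; and ⟨ψ_j,φ̃_i⟩ = 0 for all i∈I and j∈J. Then the combined family consisting of (φ_i)_{i∈I} together with (ψ_j)_{j∈J}, indexed by the disjoint union I⊔J, is a Riesz sequence in H. -/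
open MeasureTheory Matrix Finset Filter

noncomputable section

namespace Wavelets

/-! Write `f = ∑ aᵢ φᵢ + ∑ bⱼ ψⱼ`. Pairing `f` with `g = ∑ aᵢ φ̃ᵢ` gives `⟪f, g⟫ = ∑ |aᵢ|²`,
by biorthogonality and `ψⱼ ⟂ φ̃ᵢ`; Cauchy–Schwarz and the upper Riesz bound `‖g‖² ≤ C̃ ∑ |aᵢ|²`
then give `∑ |aᵢ|² ≤ C̃ ‖f‖²`. Hence `‖∑ bⱼ ψⱼ‖ ≤ ‖f‖ + ‖∑ aᵢ φᵢ‖` is also controlled by `‖f‖`,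
and the lower Riesz bound of `ψ` controls `∑ |bⱼ|²`. The upper Riesz bound of the union is the
triangle inequality. -/

lemma norm_add_sq_le_two_mul {E : Type*} [SeminormedAddCommGroup E] (x y : E) :
    ‖x + y‖ ^ 2 ≤ 2 * (‖x‖ ^ 2 + ‖y‖ ^ 2) :=
  (pow_le_pow_left₀ (norm_nonneg _) (norm_add_le x y) 2).trans add_sq_le

lemma linearCombination_sumElim {R M I J : Type*} [Semiring R] [AddCommMonoid M] [Module R M]
    (φ : I → M) (ψ : J → M) (c₁ : I →₀ R) (c₂ : J →₀ R) :
    Finsupp.linearCombination R (Sum.elim φ ψ) (c₁.sumElim c₂) =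
      Finsupp.linearCombination R φ c₁ + Finsupp.linearCombination R ψ c₂ := by
  simp only [Finsupp.linearCombination_apply, Finsupp.sum_sumElim]
  rfl

section RieszBounds

variable {H : Type*} [NormedAddCommGroup H] [InnerProductSpace ℂ H] {I J : Type*}

lemma RieszSeqH.exists_upper {v : I → H} (hv : RieszSeqH v) :
    ∃ B ≥ 0, ∀ c : I →₀ ℂ,
      ‖Finsupp.linearCombination ℂ v c‖ ^ 2 ≤ B * c.sum fun _ a => ‖a‖ ^ 2 := by
  obtain ⟨C, hC, hbounds⟩ := hv
  refine ⟨C, hC.le, fun c => ?_⟩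
  rw [Finsupp.linearCombination_apply]
  exact (hbounds c).2

lemma RieszSeqH.exists_lower {v : I → H} (hv : RieszSeqH v) :
    ∃ A ≥ 0, ∀ c : I →₀ ℂ,
      (c.sum fun _ a => ‖a‖ ^ 2) ≤ A * ‖Finsupp.linearCombination ℂ v c‖ ^ 2 := by
  obtain ⟨C, hC, hbounds⟩ := hv
  refine ⟨C, hC.le, fun c => ?_⟩
  rw [Finsupp.linearCombination_apply]
  exact (inv_mul_le_iff₀ hC).1 (hbounds c).1

lemma RieszSeqH.of_bounds {v : I → H} {A B : ℝ}
    (hlower : ∀ c : I →₀ ℂ,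
      (c.sum fun _ a => ‖a‖ ^ 2) ≤ A * ‖Finsupp.linearCombination ℂ v c‖ ^ 2)
    (hupper : ∀ c : I →₀ ℂ,
      ‖Finsupp.linearCombination ℂ v c‖ ^ 2 ≤ B * c.sum fun _ a => ‖a‖ ^ 2) :
    RieszSeqH v := by
  refine ⟨max (max A B) 1, by positivity, fun c => ?_⟩
  have hS : 0 ≤ c.sum fun _ a => ‖a‖ ^ 2 := Finsupp.sum_nonneg' fun _ => by positivity
  have hA : A ≤ max (max A B) 1 := le_max_of_le_left (le_max_left A B)
  have hB : B ≤ max (max A B) 1 := le_max_of_le_left (le_max_right A B)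
  rw [inv_mul_le_iff₀ (by positivity)]
  specialize hlower c
  specialize hupper c
  rw [Finsupp.linearCombination_apply] at hlower hupper
  exact ⟨hlower.trans (mul_le_mul_of_nonneg_right hA (sq_nonneg _)),
    hupper.trans (mul_le_mul_of_nonneg_right hB hS)⟩

lemma RieszSeqH.sumElim_of_bounds {φ : I → H} {ψ : J → H} {A B : ℝ}
    (hlower : ∀ (c₁ : I →₀ ℂ) (c₂ : J →₀ ℂ),
      ((c₁.sum fun _ a => ‖a‖ ^ 2) + c₂.sum fun _ a => ‖a‖ ^ 2) ≤
        A * ‖Finsupp.linearCombination ℂ φ c₁ + Finsupp.linearCombination ℂ ψ c₂‖ ^ 2)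
    (hupper : ∀ (c₁ : I →₀ ℂ) (c₂ : J →₀ ℂ),
      ‖Finsupp.linearCombination ℂ φ c₁ + Finsupp.linearCombination ℂ ψ c₂‖ ^ 2 ≤
        B * ((c₁.sum fun _ a => ‖a‖ ^ 2) + c₂.sum fun _ a => ‖a‖ ^ 2)) :
    RieszSeqH (Sum.elim φ ψ) := by
  refine RieszSeqH.of_bounds (A := A) (B := B) (fun c => ?_) (fun c => ?_) <;>
    rw [← Finsupp.comapDomain_sumElim_comapDomain c, linearCombination_sumElim,
      Finsupp.sum_sumElim]
  exacts [hlower _ _, hupper _ _]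

lemma inner_linearCombination_of_biorth [DecidableEq I] {φ tφ : I → H}
    (hbiorth : ∀ i i' : I, (inner ℂ (φ i) (tφ i') : ℂ) = if i = i' then 1 else 0)
    (c : I →₀ ℂ) (i : I) :
    inner ℂ (Finsupp.linearCombination ℂ φ c) (tφ i) = starRingEnd ℂ (c i) := by
  rw [Finsupp.linearCombination_apply, Finsupp.sum_inner]
  simp +contextual [inner_smul_left, hbiorth]

lemma inner_linearCombination_of_orth {ψ : J → H} {u : H}
    (horth : ∀ j, (inner ℂ (ψ j) u : ℂ) = 0) (c : J →₀ ℂ) :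
    inner ℂ (Finsupp.linearCombination ℂ ψ c) u = 0 := by
  rw [Finsupp.linearCombination_apply, Finsupp.sum_inner]
  simp [inner_smul_left, horth]

lemma sum_norm_sq_le_of_inner_eq_conj {tφ : I → H} {B : ℝ} (hB : 0 ≤ B)
    (hupper : ∀ c : I →₀ ℂ,
      ‖Finsupp.linearCombination ℂ tφ c‖ ^ 2 ≤ B * c.sum fun _ a => ‖a‖ ^ 2)
    (c : I →₀ ℂ) {f : H} (hf : ∀ i, inner ℂ f (tφ i) = starRingEnd ℂ (c i)) :
    (c.sum fun _ a => ‖a‖ ^ 2) ≤ B * ‖f‖ ^ 2 := by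
  have hfg : inner ℂ f (Finsupp.linearCombination ℂ tφ c) =
      ((c.sum fun _ a => ‖a‖ ^ 2 : ℝ) : ℂ) := by
    rw [Finsupp.linearCombination_apply, Finsupp.inner_sum]
    simp [inner_smul_right, hf, RCLike.mul_conj, Finsupp.sum]
  set S := c.sum fun _ a => ‖a‖ ^ 2
  set g := Finsupp.linearCombination ℂ tφ c
  have hS : 0 ≤ S := Finsupp.sum_nonneg' fun _ => by positivity
  have hS_le : S ≤ ‖f‖ * ‖g‖ := by
    simpa [hfg, abs_of_nonneg hS] using norm_inner_le_norm (𝕜 := ℂ) f g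
  have hSS : S * S ≤ S * (B * ‖f‖ ^ 2) :=
    calc S * S ≤ ‖f‖ ^ 2 * ‖g‖ ^ 2 := by nlinarith
      _ ≤ ‖f‖ ^ 2 * (B * S) := by gcongr; exact hupper c
      _ = S * (B * ‖f‖ ^ 2) := by ring
  rcases hS.eq_or_lt with hS0 | hSpos
  · rw [← hS0]; positivity
  · exact le_of_mul_le_mul_left hSS hSpos

lemma norm_add_linearCombination_sq_le {φ : I → H} {ψ : J → H} {Bφ Bψ : ℝ}
    (hφ : ∀ c : I →₀ ℂ,
      ‖Finsupp.linearCombination ℂ φ c‖ ^ 2 ≤ Bφ * c.sum fun _ a => ‖a‖ ^ 2)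
    (hψ : ∀ c : J →₀ ℂ,
      ‖Finsupp.linearCombination ℂ ψ c‖ ^ 2 ≤ Bψ * c.sum fun _ a => ‖a‖ ^ 2)
    (c₁ : I →₀ ℂ) (c₂ : J →₀ ℂ) :
    ‖Finsupp.linearCombination ℂ φ c₁ + Finsupp.linearCombination ℂ ψ c₂‖ ^ 2 ≤
      2 * max Bφ Bψ * ((c₁.sum fun _ a => ‖a‖ ^ 2) + c₂.sum fun _ a => ‖a‖ ^ 2) := by
  have hS₁ : 0 ≤ c₁.sum fun _ a => ‖a‖ ^ 2 := Finsupp.sum_nonneg' fun _ => by positivity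
  have hS₂ : 0 ≤ c₂.sum fun _ a => ‖a‖ ^ 2 := Finsupp.sum_nonneg' fun _ => by positivity
  calc _ ≤ 2 * (‖Finsupp.linearCombination ℂ φ c₁‖ ^ 2 +
        ‖Finsupp.linearCombination ℂ ψ c₂‖ ^ 2) := norm_add_sq_le_two_mul _ _
    _ ≤ 2 * (max Bφ Bψ * (c₁.sum fun _ a => ‖a‖ ^ 2) +
        max Bφ Bψ * c₂.sum fun _ a => ‖a‖ ^ 2) := by
        gcongr
        · exact (hφ c₁).trans (by gcongr; exact le_max_left _ _)
        · exact (hψ c₂).trans (by gcongr; exact le_max_right _ _)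
    _ = _ := by ring

lemma sum_norm_sq_add_le_of_biorth [DecidableEq I] {φ tφ : I → H} {ψ : J → H}
    {Bφ Bt Aψ : ℝ}
    (hBφ : 0 ≤ Bφ) (hBt : 0 ≤ Bt) (hAψ : 0 ≤ Aψ)
    (hφ : ∀ c : I →₀ ℂ,
      ‖Finsupp.linearCombination ℂ φ c‖ ^ 2 ≤ Bφ * c.sum fun _ a => ‖a‖ ^ 2)
    (htφ : ∀ c : I →₀ ℂ,
      ‖Finsupp.linearCombination ℂ tφ c‖ ^ 2 ≤ Bt * c.sum fun _ a => ‖a‖ ^ 2)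
    (hψ : ∀ c : J →₀ ℂ,
      (c.sum fun _ a => ‖a‖ ^ 2) ≤ Aψ * ‖Finsupp.linearCombination ℂ ψ c‖ ^ 2)
    (hbiorth : ∀ i i' : I, (inner ℂ (φ i) (tφ i') : ℂ) = if i = i' then 1 else 0)
    (horth : ∀ (i : I) (j : J), (inner ℂ (ψ j) (tφ i) : ℂ) = 0)
    (c₁ : I →₀ ℂ) (c₂ : J →₀ ℂ) :
    ((c₁.sum fun _ a => ‖a‖ ^ 2) + c₂.sum fun _ a => ‖a‖ ^ 2) ≤
      (Bt + 2 * Aψ * (1 + Bφ * Bt)) *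
        ‖Finsupp.linearCombination ℂ φ c₁ + Finsupp.linearCombination ℂ ψ c₂‖ ^ 2 := by
  set x := Finsupp.linearCombination ℂ φ c₁
  set y := Finsupp.linearCombination ℂ ψ c₂
  have h₁ : (c₁.sum fun _ a => ‖a‖ ^ 2) ≤ Bt * ‖x + y‖ ^ 2 :=
    sum_norm_sq_le_of_inner_eq_conj hBt htφ c₁ fun i => by
      rw [inner_add_left, inner_linearCombination_of_biorth hbiorth,
        inner_linearCombination_of_orth (horth i), add_zero]
  have hy : ‖y‖ ^ 2 ≤ 2 * (‖x + y‖ ^ 2 + ‖x‖ ^ 2) := by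
    simpa using norm_add_sq_le_two_mul (x + y) (-x)
  have h₂ : (c₂.sum fun _ a => ‖a‖ ^ 2) ≤ 2 * Aψ * (1 + Bφ * Bt) * ‖x + y‖ ^ 2 :=
    calc _ ≤ Aψ * ‖y‖ ^ 2 := hψ c₂
      _ ≤ Aψ * (2 * (‖x + y‖ ^ 2 + Bφ * (Bt * ‖x + y‖ ^ 2))) := by
          gcongr
          exact hy.trans (by gcongr; exact (hφ c₁).trans (by gcongr))
      _ = _ := by ring
  linarith

end RieszBounds

theorem riesz_union_riesz_general
    {H : Type*} [NormedAddCommGroup H] [InnerProductSpace ℂ H]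
    {I J : Type*} [DecidableEq I]
    (φ tφ : I → H) (ψ : J → H)
    (hφ : RieszSeqH φ) (htφ : RieszSeqH tφ)
    (hbiorth : ∀ i i' : I, (inner ℂ (φ i) (tφ i') : ℂ) = if i = i' then 1 else 0)
    (hψ : RieszSeqH ψ)
    (horth : ∀ (i : I) (j : J), (inner ℂ (ψ j) (tφ i) : ℂ) = 0) :
    RieszSeqH (Sum.elim φ ψ) := by
  obtain ⟨Bφ, hBφ, hφ_upper⟩ := hφ.exists_upper
  obtain ⟨Bt, hBt, htφ_upper⟩ := htφ.exists_upper
  obtain ⟨Aψ, hAψ, hψ_lower⟩ := hψ.exists_lower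
  obtain ⟨Bψ, -, hψ_upper⟩ := hψ.exists_upper
  exact RieszSeqH.sumElim_of_bounds
    (sum_norm_sq_add_le_of_biorth hBφ hBt hAψ hφ_upper htφ_upper hψ_lower hbiorth horth)
    (norm_add_linearCombination_sq_le hφ_upper hψ_upper)

/-- a Riesz sequence together with a further Riesz sequence orthogonal to a
biorthogonal dual of the first is again a Riesz sequence. -/
theorem riesz_union_riesz
    {H : Type*} [NormedAddCommGroup H] [InnerProductSpace ℂ H] [CompleteSpace H]
    {I J : Type*} [Countable I] [Countable J] [DecidableEq I]
    (φ tφ : I → H) (ψ : J → H)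
    (hφ : RieszSeqH φ) (htφ : RieszSeqH tφ)
    (hbiorth : ∀ i i' : I, (inner ℂ (φ i) (tφ i') : ℂ) = if i = i' then 1 else 0)
    (hψ : RieszSeqH ψ)
    (horth : ∀ (i : I) (j : J), (inner ℂ (ψ j) (tφ i) : ℂ) = 0) :
    RieszSeqH (Sum.elim φ ψ) :=
  riesz_union_riesz_general φ tφ ψ hφ htφ hbiorth hψ horth

end Wavelets
end
end

section
/- Let φ be an r×1 vector of compactly supported functions in L²(ℝ) satisfying φ = 2∑_{k∈ℤ}a(k)φ(2·−k) a.e. for a finitely supported a:ℤ→ℂ^{r×r}, let φ^L be a finite family of compactly supported functions in L²([0,∞)), and suppose Φ := {φ^L}∪{φ(·−k): k≥n_φ} satisfies: every φ(·−k₀), k₀≥n_φ, is supported in [0,∞) with φ(·−k₀)=2∑_{k≥n_φ}a(k−2k₀)φ(2·−k) a.e., and φ^L = 2A_L·φ^L(2·)+2∑_{k≥n_φ}A(k)φ(2·−k) a.e. for some matrix A_L and finitely supported matrix sequence A. Let {j₀,…,j_ℓ} ⊆ {0,…,m−1} and suppose every η∈Φ has continuous one-sided derivatives of all orders less than m on some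 [0,ε_η), ε_η>0; define M_p(η) := (η^{(j₀)}(0),…,η^{(j_ℓ)}(0)) ∈ ℂ^{ℓ+1} (one-sided derivatives at 0). Then there exists an invertible complex matrix C of size (#φ^L+r)×(#φ^L+r) with the following property: writing the transformed family C·(φ^L; φ(·−n_φ)) as the concatenation of two blocks φ^{L,E} and φ^{L,I}, one has M_p(η)=0 for every η∈φ^{L,I} while {M_p(η): η∈φ^{L,E}} is a basis of the linear span of {M_p(η): η∈Φ}; moreover Φ^{bc} := {φ^{L,I}}∪{φ(·−k): k≥n_φ+1} again satisfies the analogous refinement structure with n_φ replaced by n_φ+1 (i.e., φ^{L,I} = 2A'_L·φ^{L,I}(2·)+2∑_{k≥n_φ+1}A'(k)φ(2·−k) a.e. for some matrix A'_L and finitely supported A'), and M_p(η)=0 for every η∈Φ^{bc}. -/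
open MeasureTheory Matrix Finset Filter

noncomputable section

/-!
Near `0` only `φ^L` and `φ(· - n_φ)` are seen: a shift `φ(· - k)` with `k > n_φ` vanishes a.e.
on `(-∞, 1)` and, being continuous on some `[0, ε)`, vanishes on a right neighbourhood of `0`.
Hence the stacked vector `Φ₀ = (φ^L; φ(· - n_φ))` satisfies `Φ₀(x) = 2 B Φ₀(2x)` near `0⁺`, and
differentiating `j_t` times at `0⁺` gives `B M = M diag(2^{-(j_t+1)})` for the matrix `M` of
boundary values. So the kernel of `c ↦ c M` is invariant under `c ↦ c B`. Let the interior
rows of `C` be a basis of this kernel and the exterior rows complete it to a basis. The interior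
block then satisfies the boundary conditions and, since `C_I B = L C_I`, refines into itself
plus shifts beyond `n_φ`, while `c ↦ c M` maps the span of the exterior rows isomorphically onto
the span of all boundary values.
-/

open Topology

theorem iteratedDerivWithin_Ici_comp_mul_left {E : Type*} [NormedAddCommGroup E]
    [NormedSpace ℝ E] {c : ℝ} (hc : 0 < c) (f : ℝ → E) (n : ℕ) {x : ℝ} (hx : 0 ≤ x) :
    iteratedDerivWithin n (fun y => f (c * y)) (Set.Ici 0) x =
      c ^ n • iteratedDerivWithin n f (Set.Ici 0) (c * x) := by
  let g : ℝ ≃L[ℝ] ℝ := ContinuousLinearEquiv.unitsEquivAut ℝ (Units.mk0 c hc.ne')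
  have hg : ∀ y, g y = y * c := fun _ => rfl
  have hpre : g ⁻¹' Set.Ici 0 = Set.Ici 0 := by
    ext y; simp [hg, mul_nonneg_iff_of_pos_right hc]
  have hcomp : (fun y => f (c * y)) = f ∘ g := by ext y; simp [hg, mul_comm]
  have hderiv := g.iteratedFDerivWithin_comp_right f (uniqueDiffOn_Ici 0)
    (x := x) (by simpa [hg] using mul_nonneg hx hc.le) n
  rw [hpre, ← hcomp] at hderiv
  rw [iteratedDerivWithin_eq_iteratedFDerivWithin, hderiv,
    ContinuousMultilinearMap.compContinuousLinearMap_apply,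
    iteratedDerivWithin_eq_iteratedFDerivWithin]
  simp only [ContinuousLinearEquiv.coe_coe, hg, one_mul, mul_comm x c]
  simpa using
    (iteratedFDerivWithin ℝ n f (Set.Ici 0) (c * x)).map_smul_univ (fun _ => c) (fun _ => 1)

theorem iteratedDerivWithin_sum_const_mul {𝕜 𝕜' ι : Type*} [NontriviallyNormedField 𝕜]
    [NormedDivisionRing 𝕜'] [NormedAlgebra 𝕜 𝕜'] {s : Set 𝕜} {x : 𝕜} {n : ℕ}
    (hs : UniqueDiffOn 𝕜 s) (hx : x ∈ s) (u : Finset ι) (c : ι → 𝕜') {f : ι → 𝕜 → 𝕜'}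
    (hf : ∀ j ∈ u, ContDiffWithinAt 𝕜 n (f j) s x) :
    iteratedDerivWithin n (fun y => ∑ j ∈ u, c j * f j y) s x =
      ∑ j ∈ u, c j * iteratedDerivWithin n (f j) s x := by
  simp_rw [iteratedDerivWithin_eq_iteratedFDerivWithin]
  rw [iteratedFDerivWithin_fun_sum_apply hs hx fun j hj => contDiffWithinAt_const.mul (hf j hj)]
  simp only [_root_.sum_apply, ← iteratedDerivWithin_eq_iteratedFDerivWithin,
    iteratedDerivWithin_const_mul_field]

theorem eventuallyEq_zero_nhdsGE_of_ae {X : Type*} [TopologicalSpace X] [T2Space X] [Zero X]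
    {f : ℝ → X} {ε δ : ℝ} (hε : 0 < ε) (hδ : 0 < δ) (hf : ContinuousOn f (Set.Ico 0 ε))
    (hae : ∀ᵐ x ∂volume, x ∈ Set.Ioo 0 δ → f x = 0) : f =ᶠ[𝓝[≥] 0] 0 := by
  have hεδ : 0 < min ε δ := lt_min hε hδ
  have hcont : ContinuousOn f (Set.Ico 0 (min ε δ)) :=
    hf.mono (Set.Ico_subset_Ico_right (min_le_left _ _))
  have hopen : Set.EqOn f 0 (Set.Ioo 0 (min ε δ)) := by
    refine Measure.eqOn_open_of_ae_eq (μ := volume) ?_ isOpen_Ioo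
      (hcont.mono Set.Ioo_subset_Ico_self) continuousOn_const
    rw [EventuallyEq, ae_restrict_iff' measurableSet_Ioo]
    filter_upwards [hae] with x hx hxI
    exact hx ⟨hxI.1, hxI.2.trans_le (min_le_right _ _)⟩
  have hIco := hopen.of_subset_closure hcont continuousOn_const Set.Ioo_subset_Ico_self
    (by rw [closure_Ioo hεδ.ne]; exact Set.Ico_subset_Icc_self)
  filter_upwards [Ico_mem_nhdsGE hεδ] with x hx using hIco hx

theorem exists_pos_forall_contDiffOn_Ico {ι E : Type*} [Finite ι] [NormedAddCommGroup E]
    [NormedSpace ℝ E] {N : WithTop ℕ∞} {F : ι → ℝ → E}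
    (hF : ∀ w, ∃ ε > 0, ContDiffOn ℝ N (F w) (Set.Ico 0 ε)) :
    ∃ ε > 0, ∀ w, ContDiffOn ℝ N (F w) (Set.Ico 0 ε) := by
  have hev : ∀ w, ∀ᶠ δ in 𝓝[>] (0 : ℝ), ContDiffOn ℝ N (F w) (Set.Ico 0 δ) := fun w => by
    obtain ⟨ε, hε, hFε⟩ := hF w
    filter_upwards [Ioo_mem_nhdsGT hε] with δ hδ using hFε.mono (Set.Ico_subset_Ico_right hδ.2.le)
  obtain ⟨ε, hFε, hε⟩ := ((Filter.eventually_all.2 hev).and self_mem_nhdsWithin).exists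
  exact ⟨ε, hε, hFε⟩

theorem comp_sub_eventuallyEq_zero_nhdsGE {f : ℝ → ℂ} {n k ε : ℝ} (hnk : n < k) (hε : 0 < ε)
    (hf : ContinuousOn (fun x => f (x - k)) (Set.Ico 0 ε))
    (hsupp : ∀ᵐ x ∂volume, x < 0 → f (x - n) = 0) :
    (fun x => f (x - k)) =ᶠ[𝓝[≥] 0] 0 := by
  refine eventuallyEq_zero_nhdsGE_of_ae hε (sub_pos.2 hnk) hf ?_
  have hshift := (measurePreserving_add_right volume (n - k)).quasiMeasurePreserving.ae hsupp
  filter_upwards [hshift] with x hx hxI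
  have hx' := hx (by linarith [hxI.2])
  rwa [show x + (n - k) - n = x - k by ring] at hx'

theorem eventuallyEq_refinement_of_ae {ι : Type*} [Fintype ι] {F T : ι → ℝ → ℂ}
    {B : Matrix ι ι ℂ} {ε : ℝ} (hε : 0 < ε) (hF : ∀ w, ContinuousOn (F w) (Set.Ico 0 ε))
    (href : ∀ w, ∀ᵐ x ∂volume, F w x = 2 * ∑ w', B w w' * F w' (2 * x) + 2 * T w (2 * x))
    (hT : ∀ w, T w =ᶠ[𝓝[≥] 0] 0) (w : ι) :
    F w =ᶠ[𝓝[≥] 0] fun x => 2 * ∑ w', B w w' * F w' (2 * x) := by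
  have hmaps : Set.MapsTo (fun x : ℝ => 2 * x) (Set.Ico 0 (ε / 2)) (Set.Ico 0 ε) :=
    fun x hx => ⟨by linarith [hx.1], by linarith [hx.2]⟩
  have hcont : ContinuousOn (fun x => F w x - 2 * ∑ w', B w w' * F w' (2 * x))
      (Set.Ico 0 (ε / 2)) := by
    refine ((hF w).mono (Set.Ico_subset_Ico_right (by linarith))).sub
      (continuousOn_const.mul (continuousOn_finsetSum _ fun w' _ => ?_))
    exact continuousOn_const.mul ((hF w').comp (by fun_prop) hmaps)
  have htwo : Tendsto (fun x : ℝ => 2 * x) (𝓝[≥] 0) (𝓝[≥] 0) :=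
    tendsto_nhdsWithin_of_tendsto_nhds_of_eventually_within _
      ((continuous_const.mul continuous_id).tendsto' 0 0 (mul_zero 2) |>.mono_left
        nhdsWithin_le_nhds)
      (eventually_nhdsWithin_of_forall fun x hx => Set.mem_Ici.2 (mul_nonneg zero_le_two hx))
  obtain ⟨δ, hδ, hTδ⟩ := mem_nhdsGE_iff_exists_Ico_subset.1 ((hT w).comp_tendsto htwo)
  have hdiff := eventuallyEq_zero_nhdsGE_of_ae (half_pos hε) hδ hcont (by
    filter_upwards [href w] with x hx hxI
    have hTx : T w (2 * x) = 0 := hTδ (Set.Ioo_subset_Ico_self hxI)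
    simp [hx, hTx])
  filter_upwards [hdiff] with x hx using sub_eq_zero.1 hx

section LinearAlgebra

variable {K V W : Type*} [Field K] [AddCommGroup V] [Module K V] [AddCommGroup W] [Module K W]

theorem Submodule.exists_basis_sum_span_inr_eq [FiniteDimensional K V] (U : Submodule K V) :
    ∃ (pE pI : ℕ) (b : Module.Basis (Fin pE ⊕ Fin pI) K V),
      Submodule.span K (Set.range (b ∘ Sum.inr)) = U := by
  obtain ⟨U', hU'⟩ := U.exists_isCompl
  let b := ((Module.finBasis K U').prod (Module.finBasis K U)).map
    (U'.prodEquivOfIsCompl U hU'.symm)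
  have hb : b ∘ Sum.inr = U.subtype ∘ Module.finBasis K U := by
    ext u : 1
    simp [b, Submodule.coe_prodEquivOfIsCompl']
  refine ⟨_, _, b, ?_⟩
  rw [hb, Set.range_comp, Submodule.span_image, Module.Basis.span_eq, Submodule.map_subtype_top]

variable {κE κI : Type*} (b : Module.Basis (κE ⊕ κI) K V) {f : V →ₗ[K] W}

theorem Module.Basis.linearIndependent_map_comp_inl
    (hb : Submodule.span K (Set.range (b ∘ Sum.inr)) = LinearMap.ker f) :
    LinearIndependent K (f ∘ b ∘ Sum.inl) := by
  have hsum := linearIndependent_sum.1 b.linearIndependent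
  exact hsum.1.map (hb ▸ hsum.2.2)

theorem Module.Basis.span_map_comp_inl
    (hb : Submodule.span K (Set.range (b ∘ Sum.inr)) = LinearMap.ker f) :
    Submodule.span K (Set.range (f ∘ b ∘ Sum.inl)) = LinearMap.range f := by
  rw [Set.range_comp, Submodule.span_image, LinearMap.range_eq_map, ← b.span_eq, Sum.range_eq,
    Submodule.span_union, Submodule.map_sup, hb, LinearMap.le_ker_iff_map.1 le_rfl, sup_bot_eq]

theorem Module.Basis.exists_mul_eq_one_of_rows {ι κ : Type*} [Fintype ι]
    [DecidableEq ι] [Fintype κ] [DecidableEq κ] (b : Module.Basis κ K (ι → K)) :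
    ∃ D : Matrix ι κ K, Matrix.of (fun u => b u) * D = 1 ∧ D * Matrix.of (fun u => b u) = 1 := by
  have hrows : Matrix.of (fun u => b u) = ((Pi.basisFun K ι).toMatrix b)ᵀ := by
    ext u w
    simp [Module.Basis.toMatrix_apply]
  refine ⟨(b.toMatrix (Pi.basisFun K ι))ᵀ, ?_, ?_⟩ <;>
    rw [hrows, ← Matrix.transpose_mul, Module.Basis.toMatrix_mul_toMatrix_flip,
      Matrix.transpose_one]

theorem Matrix.vecMul_mem_ker_of_mul_eq_mul_diagonal {ι κ : Type*} [Fintype ι] [Fintype κ]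
    [DecidableEq κ] {M : Matrix ι κ K} {B : Matrix ι ι K} {d : κ → K}
    (h : B * M = M * Matrix.diagonal d) {c : ι → K} (hc : c ∈ LinearMap.ker M.vecMulLinear) :
    c ᵥ* B ∈ LinearMap.ker M.vecMulLinear := by
  rw [LinearMap.mem_ker, Matrix.vecMulLinear_apply] at hc ⊢
  rw [Matrix.vecMul_vecMul, h, ← Matrix.vecMul_vecMul, hc, Matrix.zero_vecMul]

theorem Matrix.exists_mul_eq_mul_of_vecMul_mem_span {ι κ : Type*} [Fintype ι] [Fintype κ]
    (C : Matrix κ ι K) (B : Matrix ι ι K) (h : ∀ u, C u ᵥ* B ∈ Submodule.span K (Set.range C)) :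
    ∃ L : Matrix κ κ K, C * B = L * C := by
  choose L hL using fun u => (Submodule.mem_span_range_iff_exists_fun K).1 (h u)
  refine ⟨Matrix.of L, ?_⟩
  ext u w
  have := congrFun (hL u) w
  simp only [Finset.sum_apply, Pi.smul_apply, smul_eq_mul] at this
  exact this.symm

theorem LinearMap.exists_invertible_matrix_adapted_to_ker {ι : Type*} [Fintype ι]
    [DecidableEq ι] (f : (ι → K) →ₗ[K] W) :
    ∃ (pE pI : ℕ) (C : Matrix (Fin pE ⊕ Fin pI) ι K) (D : Matrix ι (Fin pE ⊕ Fin pI) K),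
      pE + pI = Fintype.card ι ∧ C * D = 1 ∧ D * C = 1 ∧
      Submodule.span K (Set.range fun u => C (.inr u)) = LinearMap.ker f ∧
      LinearIndependent K (fun u => f (C (.inl u))) ∧
      Submodule.span K (Set.range fun u => f (C (.inl u))) = LinearMap.range f := by
  obtain ⟨pE, pI, b, hb⟩ := (LinearMap.ker f).exists_basis_sum_span_inr_eq
  obtain ⟨D, hCD, hDC⟩ := b.exists_mul_eq_one_of_rows
  have hcard := Module.finrank_eq_card_basis b
  rw [Module.finrank_fintype_fun_eq_card, Fintype.card_sum, Fintype.card_fin,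
    Fintype.card_fin] at hcard
  exact ⟨pE, pI, _, D, hcard.symm, hCD, hDC, hb, b.linearIndependent_map_comp_inl hb,
    b.span_map_comp_inl hb⟩

end LinearAlgebra

namespace Wavelets

/-- The paper's `M_p(f)`: the one-sided derivatives `f^{(j_t)}(0)` prescribed by the boundary
conditions. -/
def boundaryJet {κ : Type*} (js : κ → ℕ) (f : ℝ → ℂ) : κ → ℂ :=
  fun t => iteratedDerivWithin (js t) f (Set.Ici 0) 0

section BoundaryJet

variable {κ : Type*} (js : κ → ℕ)

theorem boundaryJet_congr {f g : ℝ → ℂ} (h : f =ᶠ[𝓝[≥] 0] g) :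
    boundaryJet js f = boundaryJet js g :=
  funext fun _ => h.iteratedDerivWithin_eq (h.eq_of_nhdsWithin Set.self_mem_Ici)

theorem boundaryJet_eq_zero {f : ℝ → ℂ} (h : f =ᶠ[𝓝[≥] 0] 0) : boundaryJet js f = 0 := by
  rw [boundaryJet_congr js h]
  exact funext fun _ => iteratedDerivWithin_const_zero

theorem boundaryJet_comp_two_mul (f : ℝ → ℂ) :
    boundaryJet js (fun x => f (2 * x)) = fun t => 2 ^ js t * boundaryJet js f t := by
  ext t
  simpa [boundaryJet] using
    iteratedDerivWithin_Ici_comp_mul_left two_pos f (js t) le_rfl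

theorem boundaryJet_sum {ι : Type*} [Fintype ι] {F : ι → ℝ → ℂ}
    (hF : ∀ w t, ContDiffWithinAt ℝ (js t) (F w) (Set.Ici 0) 0) (c : ι → ℂ) :
    boundaryJet js (fun x => ∑ w, c w * F w x) =
      c ᵥ* Matrix.of fun w => boundaryJet js (F w) := by
  ext t
  rw [boundaryJet, iteratedDerivWithin_sum_const_mul (uniqueDiffOn_Ici 0) Set.self_mem_Ici _ c
    fun w _ => hF w t]
  rfl

theorem mul_boundaryJetMatrix {ι : Type*} [Fintype ι] [Fintype κ] [DecidableEq κ] {F : ι → ℝ → ℂ}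
    (hF : ∀ w t, ContDiffWithinAt ℝ (js t) (F w) (Set.Ici 0) 0) (B : Matrix ι ι ℂ)
    (href : ∀ w, F w =ᶠ[𝓝[≥] 0] fun x => 2 * ∑ w', B w w' * F w' (2 * x)) :
    B * Matrix.of (fun w => boundaryJet js (F w)) =
      Matrix.of (fun w => boundaryJet js (F w)) * diagonal fun t => ((2 : ℂ) ^ (js t + 1))⁻¹ := by
  have hF2 : ∀ w t, ContDiffWithinAt ℝ (js t) (fun x => F w (2 * x)) (Set.Ici 0) 0 :=
    fun w t => (hF w t).comp_of_eq 0 (by fun_prop)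
      (fun x hx => Set.mem_Ici.2 (mul_nonneg zero_le_two hx)) (mul_zero 2)
  ext w t
  have hjet := congrFun (boundaryJet_congr js (href w)) t
  simp_rw [Finset.mul_sum, ← mul_assoc] at hjet
  rw [boundaryJet_sum js hF2] at hjet
  simp only [boundaryJet_comp_two_mul, vecMul, dotProduct, Matrix.of_apply] at hjet
  rw [mul_diagonal, Matrix.of_apply, hjet, mul_apply, Finset.sum_mul]
  refine Finset.sum_congr rfl fun w' _ => ?_
  rw [Matrix.of_apply]
  field_simp
  ring

end BoundaryJet

section FilterSums

variable {β : Type*} {r : ℕ}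

theorem FinSupp.comp_sub_const {M : Type*} [Zero M] {a : ℤ → M} (ha : FinSupp a) (c : ℤ) :
    FinSupp fun k => a (k - c) :=
  ha.preimage (sub_left_injective.injOn)

theorem FinSupp.mul_left {γ : Type*} [Fintype β] {A : ℤ → Matrix β (Fin r) ℂ} (hA : FinSupp A)
    (C : Matrix γ β ℂ) : FinSupp fun k => C * A k :=
  hA.subset (Function.support_comp_subset (Matrix.mul_zero C) A)

theorem FinSupp.fromRows {γ : Type*} {A : ℤ → Matrix β (Fin r) ℂ} {A' : ℤ → Matrix γ (Fin r) ℂ}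
    (hA : FinSupp A) (hA' : FinSupp A') : FinSupp fun k => Matrix.fromRows (A k) (A' k) :=
  (hA.union hA').subset fun k hk => by
    by_contra h
    simp only [Set.mem_union, Function.mem_support, not_or, not_not] at h
    exact hk (by simp only [h.1, h.2, Matrix.fromRows_zero])

variable (A : ℤ → Matrix β (Fin r) ℂ) (φ : Fin r → ℝ → ℂ)

theorem filtSumGe_eq_sum {T : Finset ℤ} (hT : Function.support A ⊆ T) (n : ℤ) (i : β) (x : ℝ) :
    filtSumGe A φ n i x = ∑ k ∈ T with n ≤ k, ∑ j, A k i j * φ j (x - k) := by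
  refine finsum_mem_eq_sum_of_inter_support_eq (s := {k | n ≤ k}) _ ?_
  ext k
  simp only [Set.mem_inter_iff, Set.mem_ofPred_eq, Finset.coe_filter, Function.mem_support]
  refine ⟨fun ⟨hk, hne⟩ => ⟨⟨hT fun hA => hne ?_, hk⟩, hne⟩, fun ⟨⟨_, hk⟩, hne⟩ => ⟨hk, hne⟩⟩
  simp [hA]

theorem filtSumGe_eq_add_filtSumGe_succ (hA : FinSupp A) (n : ℤ) (i : β) (x : ℝ) :
    filtSumGe A φ n i x = ∑ j, A n i j * φ j (x - n) + filtSumGe A φ (n + 1) i x := by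
  classical
  have hT : Function.support A ⊆ ↑(insert n hA.toFinset) :=
    fun k hk => Finset.mem_insert_of_mem (hA.mem_toFinset.2 hk)
  rw [filtSumGe_eq_sum A φ hT, filtSumGe_eq_sum A φ hT]
  have hfilter : {k ∈ insert n hA.toFinset | n ≤ k} =
      insert n {k ∈ insert n hA.toFinset | n + 1 ≤ k} := by
    ext k
    rcases eq_or_ne k n with rfl | hkn
    · simp
    · simp [hkn]
      omega
  rw [hfilter, Finset.sum_insert (by simp)]

theorem filtSumGe_eventuallyEq_zero (hA : FinSupp A) {n : ℤ} {l : Filter ℝ}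
    (hφ : ∀ j, ∀ k, n ≤ k → (fun x => φ j (x - k)) =ᶠ[l] 0) (i : β) :
    filtSumGe A φ n i =ᶠ[l] 0 := by
  have hall : ∀ᶠ x in l, ∀ k ∈ hA.toFinset, n ≤ k → ∀ j, φ j (x - k) = 0 := by
    refine (Filter.eventually_all_finset _).2 fun k _ => ?_
    by_cases hk : n ≤ k
    · filter_upwards [Filter.eventually_all.2 fun j => hφ j k hk] with x hx _ using hx
    · exact Filter.Eventually.of_forall fun x h => absurd h hk
  filter_upwards [hall] with x hx
  rw [filtSumGe_eq_sum A φ (Set.Finite.coe_toFinset hA).symm.subset, Pi.zero_apply]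
  refine Finset.sum_eq_zero fun k hk => Finset.sum_eq_zero fun j _ => ?_
  rw [Finset.mem_filter] at hk
  rw [hx k hk.1 hk.2 j, mul_zero]

theorem sum_mul_filtSumGe [Fintype β] {γ : Type*} (hA : FinSupp A) (C : Matrix γ β ℂ)
    (n : ℤ) (u : γ) (x : ℝ) :
    ∑ w, C u w * filtSumGe A φ n w x = filtSumGe (fun k => C * A k) φ n u x := by
  have hT := (Set.Finite.coe_toFinset hA).symm.subset
  have hCT := (Function.support_comp_subset (Matrix.mul_zero C) A).trans hT
  rw [filtSumGe_eq_sum (fun k => C * A k) φ hCT]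
  simp_rw [filtSumGe_eq_sum A φ hT, Finset.mul_sum, Matrix.mul_apply, Finset.sum_mul]
  rw [Finset.sum_comm]
  refine Finset.sum_congr rfl fun k _ => ?_
  rw [Finset.sum_comm]
  simp_rw [mul_assoc]

end FilterSums

theorem refinement_mul_left {ι κ : Type*} [Fintype ι] [Fintype κ] {r : ℕ} {F : ι → ℝ → ℂ}
    {B : Matrix ι ι ℂ} {A : ℤ → Matrix ι (Fin r) ℂ} {φ : Fin r → ℝ → ℂ} {n : ℤ}
    (hA : FinSupp A) {C : Matrix κ ι ℂ} {L : Matrix κ κ ℂ} (hCB : C * B = L * C) {x : ℝ}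
    (hx : ∀ w, F w x = 2 * ∑ w', B w w' * F w' (2 * x) + 2 * filtSumGe A φ n w (2 * x)) (u : κ) :
    ∑ w, C u w * F w x =
      2 * ∑ u', L u u' * ∑ w, C u' w * F w (2 * x) +
        2 * filtSumGe (fun k => C * A k) φ n u (2 * x) := by
  have hvec : (fun w => F w x) =
      (2 : ℂ) • (B *ᵥ fun w => F w (2 * x)) + (2 : ℂ) • fun w => filtSumGe A φ n w (2 * x) := by
    ext w
    simp [hx w, mulVec, dotProduct]
  have hC := congrFun (congrArg (C *ᵥ ·) hvec) u
  rw [mulVec_add, mulVec_smul, mulVec_smul, mulVec_mulVec, hCB, ← mulVec_mulVec] at hC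
  simpa only [mulVec, dotProduct, Pi.add_apply, Pi.smul_apply, smul_eq_mul,
    sum_mul_filtSumGe A φ hA] using hC

section BoundaryBlock

variable {r p : ℕ} {φ : Fin r → ℝ → ℂ} {φL : Fin p → ℝ → ℂ} {n : ℤ}

theorem exists_pos_contDiffOn_sumElim {N : WithTop ℕ∞}
    (hsmooth : ∀ w, ∃ ε > (0 : ℝ), ContDiffOn ℝ N (PhiFam φL φ n w) (Set.Ico 0 ε)) :
    ∃ ε > 0, ∀ w, ContDiffOn ℝ N (Sum.elim φL (fun i x => φ i (x - n)) w) (Set.Ico 0 ε) :=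
  exists_pos_forall_contDiffOn_Ico fun
    | .inl i => hsmooth (.inl i)
    | .inr i => hsmooth (.inr (i, ⟨n, le_rfl⟩))

theorem shift_eventuallyEq_zero_of_shiftRef {a : ℤ → Matrix (Fin r) (Fin r) ℂ}
    (hφ : shiftRef φ φ a n n) {N : WithTop ℕ∞}
    (hsmooth : ∀ w, ∃ ε > (0 : ℝ), ContDiffOn ℝ N (PhiFam φL φ n w) (Set.Ico 0 ε))
    (i : Fin r) (k : ℤ) (hk : n + 1 ≤ k) :
    (fun x => φ i (x - k)) =ᶠ[𝓝[≥] 0] 0 := by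
  obtain ⟨δ, hδ, hsmδ⟩ := hsmooth (.inr (i, ⟨k, by omega⟩))
  exact comp_sub_eventuallyEq_zero_nhdsGE (by exact_mod_cast hk) hδ hsmδ.continuousOn (hφ i).1

theorem ae_refinement_sumElim {a : ℤ → Matrix (Fin r) (Fin r) ℂ} (hfa : FinSupp a)
    (hφ : shiftRef φ φ a n n) {AL : Matrix (Fin p) (Fin p) ℂ} {A : ℤ → Matrix (Fin p) (Fin r) ℂ}
    (hfA : FinSupp A)
    (hrefφL : ∀ i, ∀ᵐ x ∂volume,
      φL i x = 2 * ∑ i', AL i i' * φL i' (2 * x) + 2 * filtSumGe A φ n i (2 * x))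
    (w : Fin p ⊕ Fin r) :
    ∀ᵐ x ∂volume, Sum.elim φL (fun i x => φ i (x - n)) w x =
      2 * ∑ w', Matrix.fromBlocks AL (A n) 0 (a (n - 2 * n)) w w' *
          Sum.elim φL (fun i x => φ i (x - n)) w' (2 * x) +
        2 * filtSumGe (fun k => Matrix.fromRows (A k) (a (k - 2 * n))) φ (n + 1) w (2 * x) := by
  rcases w with i | i
  · filter_upwards [hrefφL i] with x hx
    have htail : filtSumGe (fun k => Matrix.fromRows (A k) (a (k - 2 * n))) φ (n + 1) (.inl i) =
        filtSumGe A φ (n + 1) i := rfl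
    rw [Sum.elim_inl, hx, filtSumGe_eq_add_filtSumGe_succ A φ hfA, Fintype.sum_sum_type, htail]
    simp only [Matrix.fromBlocks_apply₁₁, Matrix.fromBlocks_apply₁₂, Sum.elim_inl, Sum.elim_inr]
    ring
  · filter_upwards [(hφ i).2] with x hx
    have htail : filtSumGe (fun k => Matrix.fromRows (A k) (a (k - 2 * n))) φ (n + 1) (.inr i) =
        filtSumGe (fun k => a (k - 2 * n)) φ (n + 1) i := rfl
    rw [Sum.elim_inr, hx, filtSumGe_eq_add_filtSumGe_succ _ φ (hfa.comp_sub_const _),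
      Fintype.sum_sum_type, htail]
    simp only [Matrix.fromBlocks_apply₂₁, Matrix.fromBlocks_apply₂₂, Sum.elim_inr,
      Matrix.zero_apply, zero_mul, Finset.sum_const_zero, zero_add]
    ring

theorem span_range_boundaryJet_phiFam {κ : Type*} (js : κ → ℕ)
    (hfar : ∀ i (k : ℤ), n + 1 ≤ k → (fun x => φ i (x - k)) =ᶠ[𝓝[≥] 0] 0) :
    Submodule.span ℂ (Set.range fun w => boundaryJet js (PhiFam φL φ n w)) =
      Submodule.span ℂ
        (Set.range fun w => boundaryJet js (Sum.elim φL (fun i x => φ i (x - n)) w)) := by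
  refine le_antisymm (Submodule.span_le.2 ?_) (Submodule.span_mono ?_)
  · rintro _ ⟨i | ⟨i, k, hk⟩, rfl⟩
    · exact Submodule.subset_span ⟨.inl i, rfl⟩
    rcases hk.eq_or_lt with rfl | hk
    · exact Submodule.subset_span ⟨.inr i, rfl⟩
    · have hzero : boundaryJet js (PhiFam φL φ n (.inr (i, ⟨k, hk.le⟩))) = 0 :=
        boundaryJet_eq_zero js (hfar i k hk)
      simp only [hzero, SetLike.mem_coe, zero_mem]
  · rintro _ ⟨i | i, rfl⟩
    · exact ⟨.inl i, rfl⟩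
    · exact ⟨.inr (i, ⟨n, le_rfl⟩), rfl⟩

end BoundaryBlock

theorem boundary_condition_modification_general
    {r p m ℓ : ℕ}
    (φ : Fin r → ℝ → ℂ)
    (a : ℤ → Matrix (Fin r) (Fin r) ℂ) (hfa : FinSupp a)
    (φL : Fin p → ℝ → ℂ)
    (nφ : ℤ)
    -- item (i)
    (hi₁ : ∀ k₀ : ℤ, nφ ≤ k₀ → shiftRef φ φ a nφ k₀)
    (AL : Matrix (Fin p) (Fin p) ℂ) (A : ℤ → Matrix (Fin p) (Fin r) ℂ) (hfA : FinSupp A)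
    (hrefφL : ∀ i, ∀ᵐ (x : ℝ) ∂volume,
      φL i x = 2 * ∑ i', AL i i' * φL i' (2 * x) + 2 * filtSumGe A φ nφ i (2 * x))
    -- the orders of the boundary conditions and the smoothness hypothesis
    (js : Fin (ℓ + 1) → ℕ) (hjs : ∀ t, js t < m)
    (hsmooth : ∀ w : HIdx (Fin p) r nφ, ∃ ε > (0 : ℝ),
      ContDiffOn ℝ ((m - 1 : ℕ) : ℕ∞) (PhiFam φL φ nφ w) (Set.Ico (0 : ℝ) ε)) :
    ∃ pE pI : ℕ, pE + pI = p + r ∧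
    ∃ (C : Matrix (Fin pE ⊕ Fin pI) (Fin p ⊕ Fin r) ℂ)
      (D : Matrix (Fin p ⊕ Fin r) (Fin pE ⊕ Fin pI) ℂ),
      C * D = 1 ∧ D * C = 1 ∧
      (let base : (Fin p ⊕ Fin r) → ℝ → ℂ :=
        Sum.elim φL fun i => fun x => φ i (x - (nφ : ℝ))
       let φE : Fin pE → ℝ → ℂ := fun w x => ∑ w', C (Sum.inl w) w' * base w' x
       let φI : Fin pI → ℝ → ℂ := fun w x => ∑ w', C (Sum.inr w) w' * base w' x
       let Mp : (ℝ → ℂ) → (Fin (ℓ + 1) → ℂ) :=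
         fun f t => iteratedDerivWithin (js t) f (Set.Ici (0 : ℝ)) 0
       (∀ w, Mp (φI w) = 0) ∧
       LinearIndependent ℂ (fun w => Mp (φE w)) ∧
       Submodule.span ℂ (Set.range fun w => Mp (φE w)) =
         Submodule.span ℂ (Set.range fun w : HIdx (Fin p) r nφ => Mp (PhiFam φL φ nφ w)) ∧
       (∃ (AL' : Matrix (Fin pI) (Fin pI) ℂ) (A' : ℤ → Matrix (Fin pI) (Fin r) ℂ),
         FinSupp A' ∧ ∀ w, ∀ᵐ (x : ℝ) ∂volume,
           φI w x = 2 * ∑ w', AL' w w' * φI w' (2 * x) +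
             2 * filtSumGe A' φ (nφ + 1) w (2 * x)) ∧
       (∀ w : HIdx (Fin pI) r (nφ + 1), Mp (PhiFam φI φ (nφ + 1) w) = 0)) := by
  classical
  set base : Fin p ⊕ Fin r → ℝ → ℂ := Sum.elim φL fun i x => φ i (x - nφ)
  obtain ⟨ε, hε, hsm⟩ := exists_pos_contDiffOn_sumElim hsmooth
  have hjetSmooth : ∀ w t, ContDiffWithinAt ℝ (js t) (base w) (Set.Ici 0) 0 := fun w t =>
    ((hsm w 0 ⟨le_rfl, hε⟩).mono_of_mem_nhdsWithin (Ico_mem_nhdsGE hε)).of_le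
      (by exact_mod_cast Nat.le_sub_one_of_lt (hjs t))
  have hfar := shift_eventuallyEq_zero_of_shiftRef (hi₁ nφ le_rfl) hsmooth
  have hfAb := hfA.fromRows (hfa.comp_sub_const (2 * nφ))
  have hae := ae_refinement_sumElim hfa (hi₁ nφ le_rfl) hfA hrefφL
  have hBM := mul_boundaryJetMatrix js hjetSmooth _ <| eventuallyEq_refinement_of_ae hε
    (fun w => (hsm w).continuousOn) hae fun w => filtSumGe_eventuallyEq_zero _ φ hfAb hfar w
  set f := (Matrix.of fun w => boundaryJet js (base w)).vecMulLinear
  obtain ⟨pE, pI, C, D, hcard, hCD, hDC, hkerI, hindepE, hspanE⟩ :=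
    f.exists_invertible_matrix_adapted_to_ker
  have hker : ∀ u, C (.inr u) ∈ LinearMap.ker f := fun u => hkerI ▸ Submodule.subset_span ⟨u, rfl⟩
  set CI := Matrix.of fun u => C (.inr u)
  obtain ⟨L, hL⟩ := Matrix.exists_mul_eq_mul_of_vecMul_mem_span CI _
    fun u => hkerI ▸ Matrix.vecMul_mem_ker_of_mul_eq_mul_diagonal hBM (hker u)
  refine ⟨pE, pI, by simpa using hcard, C, D, hCD, hDC, ?_⟩
  intro _ φE φI Mp
  have hjetC : ∀ u, boundaryJet js (fun x => ∑ w, C u w * base w x) = f (C u) :=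
    fun u => boundaryJet_sum js hjetSmooth (C u)
  have hMpI : ∀ u, Mp (φI u) = 0 := fun u => (hjetC (.inr u)).trans (hker u)
  have hMpE : (fun u => Mp (φE u)) = fun u => f (C (.inl u)) := funext fun u => hjetC (.inl u)
  refine ⟨hMpI, hMpE ▸ hindepE, ?_,
    ⟨L, fun k => CI * Matrix.fromRows (A k) (a (k - 2 * nφ)), hfAb.mul_left CI, fun u => ?_⟩, ?_⟩
  · rw [hMpE, hspanE, range_vecMulLinear]
    exact (span_range_boundaryJet_phiFam js hfar).symm
  · filter_upwards [ae_all_iff.2 hae] with x hx using refinement_mul_left hfAb hL hx u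
  · rintro (u | ⟨i, k, hk⟩)
    · exact hMpI u
    · exact boundaryJet_eq_zero js (hfar i k hk)

/-- modification of the boundary refinable functions so that all elements of the
new family `Φ^{bc}` satisfy the homogeneous boundary conditions `η^{(j_t)}(0) = 0`. -/
theorem boundary_condition_modification
    {r p m ℓ : ℕ}
    (φ : Fin r → ℝ → ℂ) (hφ2 : ∀ i, MemL2 (φ i)) (hφc : ∀ i, CptSupp (φ i))
    (a : ℤ → Matrix (Fin r) (Fin r) ℂ) (hfa : FinSupp a)
    (hrefφ : ∀ i, ∀ᵐ (x : ℝ) ∂volume, φ i x = 2 * filtSum a φ i (2 * x))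
    (φL : Fin p → ℝ → ℂ)
    (hφL : ∀ i, MemL2 (φL i) ∧ SuppHalf (φL i) ∧ CptSupp (φL i))
    (nφ : ℤ)
    -- item (i)
    (hi₁ : ∀ k₀ : ℤ, nφ ≤ k₀ → shiftRef φ φ a nφ k₀)
    (AL : Matrix (Fin p) (Fin p) ℂ) (A : ℤ → Matrix (Fin p) (Fin r) ℂ) (hfA : FinSupp A)
    (hrefφL : ∀ i, ∀ᵐ (x : ℝ) ∂volume,
      φL i x = 2 * ∑ i', AL i i' * φL i' (2 * x) + 2 * filtSumGe A φ nφ i (2 * x))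
    -- the orders of the boundary conditions and the smoothness hypothesis
    (js : Fin (ℓ + 1) → ℕ) (hjs : ∀ t, js t < m)
    (hsmooth : ∀ w : HIdx (Fin p) r nφ, ∃ ε > (0 : ℝ),
      ContDiffOn ℝ ((m - 1 : ℕ) : ℕ∞) (PhiFam φL φ nφ w) (Set.Ico (0 : ℝ) ε)) :
    ∃ pE pI : ℕ, pE + pI = p + r ∧
    ∃ (C : Matrix (Fin pE ⊕ Fin pI) (Fin p ⊕ Fin r) ℂ)
      (D : Matrix (Fin p ⊕ Fin r) (Fin pE ⊕ Fin pI) ℂ),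
      C * D = 1 ∧ D * C = 1 ∧
      (let base : (Fin p ⊕ Fin r) → ℝ → ℂ :=
        Sum.elim φL fun i => fun x => φ i (x - (nφ : ℝ))
       let φE : Fin pE → ℝ → ℂ := fun w x => ∑ w', C (Sum.inl w) w' * base w' x
       let φI : Fin pI → ℝ → ℂ := fun w x => ∑ w', C (Sum.inr w) w' * base w' x
       let Mp : (ℝ → ℂ) → (Fin (ℓ + 1) → ℂ) :=
         fun f t => iteratedDerivWithin (js t) f (Set.Ici (0 : ℝ)) 0
       (∀ w, Mp (φI w) = 0) ∧
       LinearIndependent ℂ (fun w => Mp (φE w)) ∧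
       Submodule.span ℂ (Set.range fun w => Mp (φE w)) =
         Submodule.span ℂ (Set.range fun w : HIdx (Fin p) r nφ => Mp (PhiFam φL φ nφ w)) ∧
       (∃ (AL' : Matrix (Fin pI) (Fin pI) ℂ) (A' : ℤ → Matrix (Fin pI) (Fin r) ℂ),
         FinSupp A' ∧ ∀ w, ∀ᵐ (x : ℝ) ∂volume,
           φI w x = 2 * ∑ w', AL' w w' * φI w' (2 * x) +
             2 * filtSumGe A' φ (nφ + 1) w (2 * x)) ∧
       (∀ w : HIdx (Fin pI) r (nφ + 1), Mp (PhiFam φI φ (nφ + 1) w) = 0)) :=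
  boundary_condition_modification_general φ a hfa φL nφ hi₁ AL A hfA hrefφL js hjs hsmooth

end Wavelets
end
end
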